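/- arXiv:2206.04044 — 3 statements merged into one kernel-verified Lean document; each statement's English description precedes it below -/
import Mathlib

section
/- There exist universal constants c₃ > 0 and c₄ > 0 such that the following holds. Let A ≥ 2 be an integer, γ ∈ [2/3,1), ε ∈ (0, 1/(42(1−γ))], and set p = γ + 14(1−γ)²ε/γ and q = γ − 14(1−γ)²ε/γ. For any positive integer M with c₃·(log A)/(1−γ) ≤ M ≤ c₄/((1−γ)³ε²·log A), there exists a subset E_M ⊆ {0,1,…,M} such that, with B_p ~ Binomial(M,p) and B_q ~ Binomial(M,q): P(B_p ∈ E_M) ≥ 1 − 2/A⁴, P(B_q ∈ E_M) ≥ 1 − 2/A⁴, and P(B_q = n) ≥ (1/2)·P(B_p = n) for every n ∈ E_M. -/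
open scoped BigOperators ENNReal Classical

set_option maxHeartbeats 1000000

noncomputable section

namespace ZSMG

variable {𝒮 𝒜 ℬ : Type} [Fintype 𝒮] [Fintype 𝒜] [Fintype ℬ]
  [DecidableEq 𝒮] [DecidableEq 𝒜] [DecidableEq ℬ]

/-- Expectation of `V : 𝒮 → ℝ` under the (sub)probability vector `p`. -/
def Pexp (p V : 𝒮 → ℝ) : ℝ := ∑ s', p s' * V s'

/-- Variance of `V` under `p`: `Var_p(V) = p(V∘V) − (pV)²`. -/
def varP (p V : 𝒮 → ℝ) : ℝ := Pexp p (fun s => V s * V s) - (Pexp p V) ^ 2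

/-- Payoff of mixed strategies `w, z` in the matrix game `M`. -/
def pay (M : 𝒜 → ℬ → ℝ) (w : 𝒜 → ℝ) (z : ℬ → ℝ) : ℝ :=
  ∑ a, ∑ b, w a * z b * M a b

/-- Value function associated with a Q-function: minimax value at each state. -/
def valQ (Q : 𝒮 → 𝒜 → ℬ → ℝ) (s : 𝒮) : ℝ :=
  ⨆ w : stdSimplex ℝ 𝒜, ⨅ z : stdSimplex ℝ ℬ, pay (Q s) w.1 z.1

/-- Sup norm over states. -/
def supNormS (f : 𝒮 → ℝ) : ℝ := ⨆ s, |f s|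

/-- Sup norm over state-action triples. -/
def supNormQ (f : 𝒮 → 𝒜 → ℬ → ℝ) : ℝ := ⨆ s, ⨆ a, ⨆ b, |f s a b|

/-- The Bernstein-style penalty `β(s,a,b;V)`; `n` is the count `N(s,a,b)` and
`p` is the row `P̂(·|s,a,b)` of the empirical kernel. -/
def penalty (γ δ Cb : ℝ) (N n : ℕ) (p V : 𝒮 → ℝ) : ℝ :=
  (if n = 0 then 1 / (1 - γ)
   else
     min
       (max (Real.sqrt (Cb * Real.log ((N : ℝ) / ((1 - γ) * δ)) * varP p V / (n : ℝ)))
         (2 * Cb * Real.log ((N : ℝ) / ((1 - γ) * δ)) / ((1 - γ) * (n : ℝ))))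
       (1 / (1 - γ))) + 4 / (N : ℝ)

/-- The pessimistic Bellman operator for the max-player. -/
def TpeMinus (γ δ Cb : ℝ) (N : ℕ) (n : 𝒮 → 𝒜 → ℬ → ℕ)
    (Ph : 𝒮 → 𝒜 → ℬ → 𝒮 → ℝ) (rh : 𝒮 → 𝒜 → ℬ → ℝ)
    (Q : 𝒮 → 𝒜 → ℬ → ℝ) : 𝒮 → 𝒜 → ℬ → ℝ := fun s a b =>
  max (rh s a b + γ * Pexp (Ph s a b) (valQ Q)
        - penalty γ δ Cb N (n s a b) (Ph s a b) (valQ Q)) 0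

/-- The pessimistic Bellman operator for the min-player. -/
def TpePlus (γ δ Cb : ℝ) (N : ℕ) (n : 𝒮 → 𝒜 → ℬ → ℕ)
    (Ph : 𝒮 → 𝒜 → ℬ → 𝒮 → ℝ) (rh : 𝒮 → 𝒜 → ℬ → ℝ)
    (Q : 𝒮 → 𝒜 → ℬ → ℝ) : 𝒮 → 𝒜 → ℬ → ℝ := fun s a b =>
  min (rh s a b + γ * Pexp (Ph s a b) (valQ Q)
        + penalty γ δ Cb N (n s a b) (Ph s a b) (valQ Q)) (1 / (1 - γ))

/-- Count `N(s,a,b)` of occurrences of `(s,a,b)` in the dataset `D`. -/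
def cnt {N : ℕ} (D : Fin N → 𝒮 × 𝒜 × ℬ × 𝒮) (s : 𝒮) (a : 𝒜) (b : ℬ) : ℕ :=
  (Finset.univ.filter fun i => (D i).1 = s ∧ (D i).2.1 = a ∧ (D i).2.2.1 = b).card

/-- Count of full transitions `(s,a,b,s')` in the dataset `D`. -/
def cntT {N : ℕ} (D : Fin N → 𝒮 × 𝒜 × ℬ × 𝒮) (s : 𝒮) (a : 𝒜) (b : ℬ) (s' : 𝒮) : ℕ :=
  (Finset.univ.filter fun i => D i = (s, a, b, s')).card

/-- Empirical transition kernel `P̂(·|s,a,b)` built from the dataset. -/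
def Phat {N : ℕ} (D : Fin N → 𝒮 × 𝒜 × ℬ × 𝒮) (s : 𝒮) (a : 𝒜) (b : ℬ) : 𝒮 → ℝ := fun s' =>
  if cnt D s a b = 0 then ((Fintype.card 𝒮 : ℝ))⁻¹
  else (cntT D s a b s' : ℝ) / (cnt D s a b : ℝ)

/-- Empirical reward `r̂` built from the dataset. -/
def rhat {N : ℕ} (r : 𝒮 → 𝒜 → ℬ → ℝ) (D : Fin N → 𝒮 × 𝒜 × ℬ × 𝒮)
    (s : 𝒮) (a : 𝒜) (b : ℬ) : ℝ :=
  if cnt D s a b = 0 then 0 else r s a b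

/-- Number of iterations `T = ⌈log(N/(1−γ))/log(1/γ)⌉` of VI-LCB-Game. -/
def Titer (γ : ℝ) (N : ℕ) : ℕ := ⌈Real.log ((N : ℝ) / (1 - γ)) / Real.log (1 / γ)⌉₊

/-- `Q_pe^− = Q⁻_T` produced by VI-LCB-Game on the dataset `D`. -/
def QpeMinus (γ δ Cb : ℝ) (r : 𝒮 → 𝒜 → ℬ → ℝ) {N : ℕ}
    (D : Fin N → 𝒮 × 𝒜 × ℬ × 𝒮) : 𝒮 → 𝒜 → ℬ → ℝ :=
  (TpeMinus γ δ Cb N (cnt D) (Phat D) (rhat r D))^[Titer γ N] (fun _ _ _ => 0)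

/-- `Q_pe^+ = Q⁺_T` produced by VI-LCB-Game on the dataset `D`. -/
def QpePlus (γ δ Cb : ℝ) (r : 𝒮 → 𝒜 → ℬ → ℝ) {N : ℕ}
    (D : Fin N → 𝒮 × 𝒜 × ℬ × 𝒮) : 𝒮 → 𝒜 → ℬ → ℝ :=
  (TpePlus γ δ Cb N (cnt D) (Phat D) (rhat r D))^[Titer γ N] (fun _ _ _ => 1 / (1 - γ))

/-- `(w,z)` is a (mixed) Nash equilibrium / saddle point of the matrix game `M`. -/
def IsMatrixNash (M : 𝒜 → ℬ → ℝ) (w : 𝒜 → ℝ) (z : ℬ → ℝ) : Prop :=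
  w ∈ stdSimplex ℝ 𝒜 ∧ z ∈ stdSimplex ℝ ℬ ∧
    (∀ w' ∈ stdSimplex ℝ 𝒜, pay M w' z ≤ pay M w z) ∧
    (∀ z' ∈ stdSimplex ℝ ℬ, pay M w z ≤ pay M w z')

/-- `μ` is a possible max-player output of the algorithm, given the final Q-estimate `Q`. -/
def IsOutputMax (Q : 𝒮 → 𝒜 → ℬ → ℝ) (μ : 𝒮 → 𝒜 → ℝ) : Prop :=
  ∀ s, ∃ z, IsMatrixNash (Q s) (μ s) z

/-- `ν` is a possible min-player output of the algorithm, given the final Q-estimate `Q`. -/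
def IsOutputMin (Q : 𝒮 → 𝒜 → ℬ → ℝ) (ν : 𝒮 → ℬ → ℝ) : Prop :=
  ∀ s, ∃ w, IsMatrixNash (Q s) w (ν s)

/-- `μ` is a stationary (Markov) policy. -/
def IsPolicy (μ : 𝒮 → 𝒜 → ℝ) : Prop := ∀ s, μ s ∈ stdSimplex ℝ 𝒜

/-- `P` is a probability transition kernel. -/
def IsKernel (P : 𝒮 → 𝒜 → ℬ → 𝒮 → ℝ) : Prop := ∀ s a b, P s a b ∈ stdSimplex ℝ 𝒮

/-- `r` is a reward function with values in `[0,1]`. -/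
def IsReward (r : 𝒮 → 𝒜 → ℬ → ℝ) : Prop := ∀ s a b, r s a b ∈ Set.Icc (0 : ℝ) 1

/-- `d` is a probability distribution over `𝒮 × 𝒜 × ℬ`. -/
def IsDist3 (d : 𝒮 → 𝒜 → ℬ → ℝ) : Prop :=
  (∀ s a b, 0 ≤ d s a b) ∧ (∑ s, ∑ a, ∑ b, d s a b) = 1

/-- Transition matrix `P^{μ,ν}` of the product policy `μ × ν`. -/
def Pmat (P : 𝒮 → 𝒜 → ℬ → 𝒮 → ℝ) (μ : 𝒮 → 𝒜 → ℝ) (ν : 𝒮 → ℬ → ℝ) :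
    Matrix 𝒮 𝒮 ℝ :=
  Matrix.of fun s s' => ∑ a, ∑ b, μ s a * ν s b * P s a b s'

/-- Reward vector `r^{μ,ν}` of the product policy `μ × ν`. -/
def rPol (r : 𝒮 → 𝒜 → ℬ → ℝ) (μ : 𝒮 → 𝒜 → ℝ) (ν : 𝒮 → ℬ → ℝ) : 𝒮 → ℝ :=
  fun s => ∑ a, ∑ b, μ s a * ν s b * r s a b

/-- Value function `V^{μ,ν} = (I − γP^{μ,ν})⁻¹ r^{μ,ν}`. -/
def Vpol (γ : ℝ) (P : 𝒮 → 𝒜 → ℬ → 𝒮 → ℝ) (r : 𝒮 → 𝒜 → ℬ → ℝ)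
    (μ : 𝒮 → 𝒜 → ℝ) (ν : 𝒮 → ℬ → ℝ) : 𝒮 → ℝ :=
  Matrix.mulVec ((1 : Matrix 𝒮 𝒮 ℝ) - γ • Pmat P μ ν)⁻¹ (rPol r μ ν)

/-- `V^{μ,⋆}(s) = min_ν V^{μ,ν}(s)`. -/
def VmuStar (γ : ℝ) (P : 𝒮 → 𝒜 → ℬ → 𝒮 → ℝ) (r : 𝒮 → 𝒜 → ℬ → ℝ)
    (μ : 𝒮 → 𝒜 → ℝ) : 𝒮 → ℝ := fun s =>
  ⨅ ν : {ν : 𝒮 → ℬ → ℝ // IsPolicy ν}, Vpol γ P r μ ν.1 s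

/-- `V^{⋆,ν}(s) = max_μ V^{μ,ν}(s)`. -/
def VstarNu (γ : ℝ) (P : 𝒮 → 𝒜 → ℬ → 𝒮 → ℝ) (r : 𝒮 → 𝒜 → ℬ → ℝ)
    (ν : 𝒮 → ℬ → ℝ) : 𝒮 → ℝ := fun s =>
  ⨆ μ : {μ : 𝒮 → 𝒜 → ℝ // IsPolicy μ}, Vpol γ P r μ.1 ν s

/-- `Q^{μ,ν}(s,a,b) = r(s,a,b) + γ P(·|s,a,b) V^{μ,ν}`. -/
def Qpol (γ : ℝ) (P : 𝒮 → 𝒜 → ℬ → 𝒮 → ℝ) (r : 𝒮 → 𝒜 → ℬ → ℝ)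
    (μ : 𝒮 → 𝒜 → ℝ) (ν : 𝒮 → ℬ → ℝ) : 𝒮 → 𝒜 → ℬ → ℝ := fun s a b =>
  r s a b + γ * Pexp (P s a b) (Vpol γ P r μ ν)

/-- `Q^{μ,⋆}(s,a,b) = min_ν Q^{μ,ν}(s,a,b)`. -/
def QmuStar (γ : ℝ) (P : 𝒮 → 𝒜 → ℬ → 𝒮 → ℝ) (r : 𝒮 → 𝒜 → ℬ → ℝ)
    (μ : 𝒮 → 𝒜 → ℝ) : 𝒮 → 𝒜 → ℬ → ℝ := fun s a b =>
  ⨅ ν : {ν : 𝒮 → ℬ → ℝ // IsPolicy ν}, Qpol γ P r μ ν.1 s a b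

/-- `Q^{⋆,ν}(s,a,b) = max_μ Q^{μ,ν}(s,a,b)`. -/
def QstarNu (γ : ℝ) (P : 𝒮 → 𝒜 → ℬ → 𝒮 → ℝ) (r : 𝒮 → 𝒜 → ℬ → ℝ)
    (ν : 𝒮 → ℬ → ℝ) : 𝒮 → 𝒜 → ℬ → ℝ := fun s a b =>
  ⨆ μ : {μ : 𝒮 → 𝒜 → ℝ // IsPolicy μ}, Qpol γ P r μ.1 ν s a b

/-- `(μs, νs)` is a Nash equilibrium of the Markov game. -/
def IsNashPair (γ : ℝ) (P : 𝒮 → 𝒜 → ℬ → 𝒮 → ℝ) (r : 𝒮 → 𝒜 → ℬ → ℝ)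
    (μs : 𝒮 → 𝒜 → ℝ) (νs : 𝒮 → ℬ → ℝ) : Prop :=
  IsPolicy μs ∧ IsPolicy νs ∧
    (∀ μ, IsPolicy μ → ∀ s, Vpol γ P r μ νs s ≤ Vpol γ P r μs νs s) ∧
    (∀ ν, IsPolicy ν → ∀ s, Vpol γ P r μs νs s ≤ Vpol γ P r μs ν s)

/-- `V(ρ) = Σ_s ρ(s) V(s)`. -/
def wAvg (ρ V : 𝒮 → ℝ) : ℝ := ∑ s, ρ s * V s

/-- Discounted occupancy measure `d^{μ,ν}(s;ρ) = (1−γ) ρᵀ(I−γP^{μ,ν})⁻¹`. -/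
def dOcc (γ : ℝ) (P : 𝒮 → 𝒜 → ℬ → 𝒮 → ℝ) (μ : 𝒮 → 𝒜 → ℝ) (ν : 𝒮 → ℬ → ℝ)
    (ρ : 𝒮 → ℝ) : 𝒮 → ℝ := fun s =>
  (1 - γ) * Matrix.vecMul ρ ((1 : Matrix 𝒮 𝒮 ℝ) - γ • Pmat P μ ν)⁻¹ s

/-- `d^{μ,ν}(s,a,b;ρ) = d^{μ,ν}(s;ρ) μ(a|s) ν(b|s)`. -/
def dOcc3 (γ : ℝ) (P : 𝒮 → 𝒜 → ℬ → 𝒮 → ℝ) (μ : 𝒮 → 𝒜 → ℝ) (ν : 𝒮 → ℬ → ℝ)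
    (ρ : 𝒮 → ℝ) : 𝒮 → 𝒜 → ℬ → ℝ := fun s a b =>
  dOcc γ P μ ν ρ s * μ s a * ν s b

/-- Clipped unilateral concentrability coefficient `C⋆_clipped` (in `ℝ≥0∞`;
note that in `ℝ≥0∞` one has `x/0 = ∞` for `x ≠ 0` and `0/0 = 0`, matching the
convention of the paper). -/
def clipCoeff (γ : ℝ) (P : 𝒮 → 𝒜 → ℬ → 𝒮 → ℝ) (ρ : 𝒮 → ℝ) (d : 𝒮 → 𝒜 → ℬ → ℝ)
    (μs : 𝒮 → 𝒜 → ℝ) (νs : 𝒮 → ℬ → ℝ) : ℝ≥0∞ :=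
  max
    (⨆ (μ : {μ : 𝒮 → 𝒜 → ℝ // IsPolicy μ}) (s : 𝒮) (a : 𝒜) (b : ℬ),
      ENNReal.ofReal
          (min (dOcc3 γ P μ.1 νs ρ s a b)
            ((Fintype.card 𝒮 * (Fintype.card 𝒜 + Fintype.card ℬ) : ℝ))⁻¹) /
        ENNReal.ofReal (d s a b))
    (⨆ (ν : {ν : 𝒮 → ℬ → ℝ // IsPolicy ν}) (s : 𝒮) (a : 𝒜) (b : ℬ),
      ENNReal.ofReal
          (min (dOcc3 γ P μs ν.1 ρ s a b)
            ((Fintype.card 𝒮 * (Fintype.card 𝒜 + Fintype.card ℬ) : ℝ))⁻¹) /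
        ENNReal.ofReal (d s a b))

/-- Probability weight of an individual dataset under `(d_b, P)`. -/
def dsWeight {N : ℕ} (d : 𝒮 → 𝒜 → ℬ → ℝ) (P : 𝒮 → 𝒜 → ℬ → 𝒮 → ℝ)
    (D : Fin N → 𝒮 × 𝒜 × ℬ × 𝒮) : ℝ :=
  ∏ i, d (D i).1 (D i).2.1 (D i).2.2.1 * P (D i).1 (D i).2.1 (D i).2.2.1 (D i).2.2.2

/-- Probability of an event over the offline dataset. -/
def dsProb {N : ℕ} (d : 𝒮 → 𝒜 → ℬ → ℝ) (P : 𝒮 → 𝒜 → ℬ → 𝒮 → ℝ)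
    (E : Set (Fin N → 𝒮 × 𝒜 × ℬ × 𝒮)) : ℝ :=
  ∑ D : Fin N → 𝒮 × 𝒜 × ℬ × 𝒮, E.indicator (dsWeight d P) D

/-- Expectation of a function of the offline dataset. -/
def dsExp {N : ℕ} (d : 𝒮 → 𝒜 → ℬ → ℝ) (P : 𝒮 → 𝒜 → ℬ → 𝒮 → ℝ)
    (g : (Fin N → 𝒮 × 𝒜 × ℬ × 𝒮) → ℝ) : ℝ :=
  ∑ D : Fin N → 𝒮 × 𝒜 × ℬ × 𝒮, dsWeight d P D * g D

/-- Dirac (deterministic) policy for the min-player. -/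
def diracB (f : 𝒮 → ℬ) : 𝒮 → ℬ → ℝ := fun s b => if b = f s then 1 else 0

/-- Binomial pmf. -/
def binomPMF (n : ℕ) (p : ℝ) (k : ℕ) : ℝ :=
  (n.choose k : ℝ) * p ^ k * (1 - p) ^ (n - k)

/-- Probability of a set of outcomes under a `Binomial(n,p)` distribution. -/
def binomProb (n : ℕ) (p : ℝ) (E : Set ℕ) : ℝ :=
  ∑ k ∈ Finset.range (n + 1), E.indicator (binomPMF n p) k

/-- Weight of an i.i.d. sample from a distribution on a finite set. -/
def iidWeight {𝒳 : Type} {N : ℕ} (d : 𝒳 → ℝ) (ω : Fin N → 𝒳) : ℝ := ∏ i, d (ω i)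

/-- Probability of an event for `N` i.i.d. draws from `d`. -/
def iidProb {𝒳 : Type} [Fintype 𝒳] {N : ℕ} (d : 𝒳 → ℝ) (E : Set (Fin N → 𝒳)) : ℝ :=
  ∑ ω : Fin N → 𝒳, E.indicator (iidWeight d) ω

/-- Number of occurrences of `x` in the sample `ω`. -/
def iidCount {𝒳 : Type} [DecidableEq 𝒳] {N : ℕ} (ω : Fin N → 𝒳) (x : 𝒳) : ℕ :=
  (Finset.univ.filter fun i => ω i = x).card

/-- Transition kernel of the hard instance `ℳ𝒢_θ`. -/
def hardP {S A B : ℕ} (θ : Fin A → ℝ) : Fin S → Fin A → Fin B → Fin S → ℝ :=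
  fun s a b s' =>
    if s.val = 0 ∧ b.val = 0 then
      θ a * (if s'.val = 0 then 1 else 0) + (1 - θ a) * (if s'.val = 1 then 1 else 0)
    else if s' = s then 1 else 0

/-- Reward of the hard instance: `r(s,a,b) = 1{s = 0}`. -/
def hardR {S A B : ℕ} : Fin S → Fin A → Fin B → ℝ := fun s _ _ => if s.val = 0 then 1 else 0

end ZSMG


section Statement13Aux

open ZSMG Finset Real

private lemma s13_exp_quad {x : ℝ} (hx : |x| ≤ 1) : Real.exp x ≤ 1 + x + x ^ 2 := by
  have h := Real.exp_bound hx (n := 2) (by norm_num)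
  rw [Finset.sum_range_succ, Finset.sum_range_succ, Finset.sum_range_zero] at h
  simp only [Nat.factorial] at h
  have h2 := (abs_sub_le_iff.1 h).1
  have : |x| ^ 2 = x ^ 2 := by rw [sq_abs]
  nlinarith [sq_nonneg x]

private lemma s13_binomPMF_nonneg {M : ℕ} {x : ℝ} (hx0 : 0 ≤ x) (hx1 : x ≤ 1) (k : ℕ) :
    0 ≤ binomPMF M x k := by
  unfold ZSMG.binomPMF
  have : (0:ℝ) ≤ 1 - x := by linarith
  positivity

private lemma s13_sum_binomPMF (M : ℕ) (x : ℝ) :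
    ∑ k ∈ range (M+1), binomPMF M x k = 1 := by
  have h := add_pow x (1-x) M
  have h2 : ∀ k ∈ range (M+1), x ^ k * (1-x) ^ (M-k) * (M.choose k : ℝ) = binomPMF M x k := by
    intro k _; unfold ZSMG.binomPMF; ring
  rw [Finset.sum_congr rfl h2] at h
  have h3 : x + (1-x) = 1 := by ring
  rw [h3, one_pow] at h
  exact h.symm

private lemma s13_chernoff_core (M : ℕ) (x z a : ℝ) (hx0 : 0 ≤ x) (hx1 : x ≤ 1) (hz : 0 < z)
    (S : Finset ℕ) (hS : S ⊆ range (M+1))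
    (hzk : ∀ k ∈ S, (1:ℝ) ≤ z ^ ((k:ℝ) - a)) :
    ∑ k ∈ S, binomPMF M x k ≤ z ^ (-a) * (1 - x + x*z) ^ M := by
  have h1 : ∑ k ∈ S, binomPMF M x k ≤ ∑ k ∈ S, z ^ ((k:ℝ) - a) * binomPMF M x k := by
    apply Finset.sum_le_sum; intro k hk
    nlinarith [s13_binomPMF_nonneg (M := M) hx0 hx1 k, hzk k hk]
  have h2 : ∑ k ∈ S, z ^ ((k:ℝ) - a) * binomPMF M x k
      ≤ ∑ k ∈ range (M+1), z ^ ((k:ℝ) - a) * binomPMF M x k := by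
    apply Finset.sum_le_sum_of_subset_of_nonneg hS
    intro k _ _
    exact mul_nonneg (Real.rpow_nonneg hz.le _) (s13_binomPMF_nonneg hx0 hx1 k)
  have h3 : ∑ k ∈ range (M+1), z ^ ((k:ℝ) - a) * binomPMF M x k
      = z ^ (-a) * (1 - x + x*z) ^ M := by
    have hterm : ∀ k ∈ range (M+1), z ^ ((k:ℝ) - a) * binomPMF M x k
        = z ^ (-a) * ((x*z) ^ k * (1-x) ^ (M-k) * (M.choose k : ℝ)) := by
      intro k _
      rw [sub_eq_add_neg, add_comm, Real.rpow_add hz, Real.rpow_natCast]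
      unfold ZSMG.binomPMF
      ring
    rw [Finset.sum_congr rfl hterm, ← Finset.mul_sum, ← add_pow]
    ring_nf
  calc ∑ k ∈ S, binomPMF M x k ≤ _ := h1
    _ ≤ _ := h2
    _ = _ := h3

private lemma s13_tail_high (M : ℕ) (x t a : ℝ) (hx0 : 0 ≤ x) (hr : 0 < 1 - x)
    (ht : 0 < t) (hl : t ≤ 2*M*(1-x)) (ha : M*x + t ≤ a) :
    ∑ k ∈ (range (M+1)).filter (fun k : ℕ => a ≤ (k:ℝ)), binomPMF M x k
      ≤ Real.exp (-(t^2/(4*(M:ℝ)*(1-x)))) := by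
  set r : ℝ := 1 - x with hrdef
  have hMpos : (0:ℝ) < M := by nlinarith
  have hMr : 0 < (M:ℝ) * r := by positivity
  set lam : ℝ := t / (2*(M:ℝ)*r) with hlam
  have hlam0 : 0 < lam := by positivity
  have hlam1 : lam ≤ 1 := by
    rw [hlam, div_le_one (by positivity)]; linarith
  have hz : (0:ℝ) < Real.exp lam := Real.exp_pos _
  have key := s13_chernoff_core M x (Real.exp lam) a hx0 (by linarith) hz
    ((range (M+1)).filter (fun k : ℕ => a ≤ (k:ℝ))) (Finset.filter_subset _ _) ?_
  · refine key.trans ?_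
    have hrw : ∀ y : ℝ, (Real.exp lam) ^ y = Real.exp (lam * y) := by
      intro y
      rw [← Real.exp_log hz, Real.log_exp, ← Real.exp_mul]
    have hfac : 1 - x + x * Real.exp lam = Real.exp lam * (x + r * Real.exp (-lam)) := by
      rw [Real.exp_neg]
      field_simp
      ring
    have hexpneg : Real.exp (-lam) ≤ 1 - lam + lam^2 := by
      have := s13_exp_quad (x := -lam) (by rw [abs_of_nonpos (by linarith)]; linarith)
      nlinarith [this]
    have hbase : x + r * Real.exp (-lam) ≤ Real.exp (-(r*(lam - lam^2))) := by
      have h1 : x + r * Real.exp (-lam) ≤ 1 - r*(lam - lam^2) := by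
        nlinarith [Real.exp_pos (-lam)]
      have h2 := Real.add_one_le_exp (-(r*(lam-lam^2)))
      linarith
    have hbase0 : 0 ≤ x + r * Real.exp (-lam) := by positivity
    calc (Real.exp lam) ^ (-a) * (1 - x + x * Real.exp lam) ^ M
        = Real.exp (lam * (-a)) * (Real.exp lam * (x + r * Real.exp (-lam))) ^ M := by
          rw [hrw, hfac]
      _ ≤ Real.exp (lam * (-a)) * (Real.exp lam * Real.exp (-(r*(lam - lam^2)))) ^ M := by
          apply mul_le_mul_of_nonneg_left _ (Real.exp_nonneg _)
          apply pow_le_pow_left₀ (by positivity)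
          exact mul_le_mul_of_nonneg_left hbase (Real.exp_nonneg _)
      _ = Real.exp (lam * (-a) + M * (lam - r*(lam - lam^2))) := by
          rw [← Real.exp_add, ← Real.exp_nat_mul, ← Real.exp_add]
          ring_nf
      _ ≤ Real.exp (-(t^2/(4*(M:ℝ)*r))) := by
          apply Real.exp_le_exp.mpr
          have hexpand : lam * (-a) + M * (lam - r*(lam - lam^2))
              ≤ lam * (-(M*x+t)) + M * (lam - r*(lam - lam^2)) := by
            nlinarith
          have heq : lam * (-(M*x+t)) + (M:ℝ) * (lam - r*(lam - lam^2))
              = -lam*t + (M:ℝ)*r*lam^2 := by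
            have hxx : (M:ℝ)*x = M - M*r := by rw [hrdef]; ring
            rw [hxx]; ring
          have hopt : -lam*t + (M:ℝ)*r*lam^2 = -(t^2/(4*(M:ℝ)*r)) := by
            rw [hlam]; field_simp; ring
          linarith [hexpand, heq, hopt]
  · intro k hk
    simp only [Finset.mem_filter] at hk
    have h1z : (1:ℝ) ≤ Real.exp lam := Real.one_le_exp hlam0.le
    calc (1:ℝ) = (Real.exp lam) ^ (0:ℝ) := (Real.rpow_zero _).symm
      _ ≤ (Real.exp lam) ^ ((k:ℝ) - a) :=
        Real.rpow_le_rpow_of_exponent_le h1z (by linarith [hk.2])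

private lemma s13_tail_low (M : ℕ) (x t a : ℝ) (hx0 : 0 ≤ x) (hr : 0 < 1 - x)
    (ht : 0 < t) (hl : t ≤ 2*M*(1-x)) (ha : a ≤ M*x - t) :
    ∑ k ∈ (range (M+1)).filter (fun k : ℕ => (k:ℝ) ≤ a), binomPMF M x k
      ≤ Real.exp (-(t^2/(4*(M:ℝ)*(1-x)))) := by
  set r : ℝ := 1 - x with hrdef
  have hMpos : (0:ℝ) < M := by nlinarith
  have hMr : 0 < (M:ℝ) * r := by positivity
  set lam : ℝ := t / (2*(M:ℝ)*r) with hlam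
  have hlam0 : 0 < lam := by positivity
  have hlam1 : lam ≤ 1 := by
    rw [hlam, div_le_one (by positivity)]; linarith
  have hz : (0:ℝ) < Real.exp (-lam) := Real.exp_pos _
  have key := s13_chernoff_core M x (Real.exp (-lam)) a hx0 (by linarith) hz
    ((range (M+1)).filter (fun k : ℕ => (k:ℝ) ≤ a)) (Finset.filter_subset _ _) ?_
  · refine key.trans ?_
    have hrw : ∀ y : ℝ, (Real.exp (-lam)) ^ y = Real.exp ((-lam) * y) := by
      intro y
      rw [← Real.exp_log hz, Real.log_exp, ← Real.exp_mul]
    have hfac : 1 - x + x * Real.exp (-lam) = Real.exp (-lam) * (x + r * Real.exp lam) := by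
      rw [Real.exp_neg]
      field_simp [hrdef]
      ring
    have hexppos : Real.exp lam ≤ 1 + lam + lam^2 := by
      have := s13_exp_quad (x := lam) (by rw [abs_of_nonneg hlam0.le]; linarith)
      nlinarith [this]
    have hbase : x + r * Real.exp lam ≤ Real.exp (r*(lam + lam^2)) := by
      have h1 : x + r * Real.exp lam ≤ 1 + r*(lam + lam^2) := by nlinarith
      have h2 := Real.add_one_le_exp (r*(lam+lam^2))
      linarith
    have hbase0 : 0 ≤ x + r * Real.exp lam := by positivity
    calc (Real.exp (-lam)) ^ (-a) * (1 - x + x * Real.exp (-lam)) ^ M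
        = Real.exp ((-lam) * (-a)) * (Real.exp (-lam) * (x + r * Real.exp lam)) ^ M := by
          rw [hrw, hfac]
      _ ≤ Real.exp ((-lam) * (-a)) * (Real.exp (-lam) * Real.exp (r*(lam + lam^2))) ^ M := by
          apply mul_le_mul_of_nonneg_left _ (Real.exp_nonneg _)
          apply pow_le_pow_left₀ (by positivity)
          exact mul_le_mul_of_nonneg_left hbase (Real.exp_nonneg _)
      _ = Real.exp (lam * a + M * (-lam + r*(lam + lam^2))) := by
          rw [← Real.exp_add, ← Real.exp_nat_mul, ← Real.exp_add]
          ring_nf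
      _ ≤ Real.exp (-(t^2/(4*(M:ℝ)*r))) := by
          apply Real.exp_le_exp.mpr
          have hexpand : lam * a + M * (-lam + r*(lam + lam^2))
              ≤ lam * (M*x - t) + M * (-lam + r*(lam + lam^2)) := by
            nlinarith
          have heq : lam * ((M:ℝ)*x - t) + (M:ℝ) * (-lam + r*(lam + lam^2))
              = -lam*t + (M:ℝ)*r*lam^2 := by
            have hxx : (M:ℝ)*x = M - M*r := by rw [hrdef]; ring
            rw [hxx]; ring
          have hopt : -lam*t + (M:ℝ)*r*lam^2 = -(t^2/(4*(M:ℝ)*r)) := by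
            rw [hlam]; field_simp; ring
          linarith [hexpand, heq, hopt]
  · intro k hk
    simp only [Finset.mem_filter] at hk
    calc (1:ℝ) = (Real.exp (-lam)) ^ (0:ℝ) := (Real.rpow_zero _).symm
      _ ≤ (Real.exp (-lam)) ^ ((k:ℝ) - a) := by
          rw [← Real.exp_log (Real.exp_pos (-lam)), Real.log_exp, ← Real.exp_mul,
            ← Real.exp_mul]
          apply Real.exp_le_exp.mpr
          nlinarith [hk.2]

private lemma s13_conc (M : ℕ) (x c τ t : ℝ) (hx0 : 0 ≤ x) (hx1 : x ≤ 1) (hr : 0 < 1-x)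
    (ht : 0 < t) (hτ : 0 < τ) (hl : t ≤ 2*M*(1-x))
    (h1 : c - τ ≤ M*x - t) (h2 : M*x + t ≤ c + τ) :
    1 - 2*Real.exp (-(t^2/(4*(M:ℝ)*(1-x)))) ≤
      binomProb M x {n : ℕ | n ∈ (range (M+1)).filter (fun n : ℕ => |(n:ℝ) - c| ≤ τ)} := by
  set E := (range (M+1)).filter (fun n : ℕ => |(n:ℝ) - c| ≤ τ) with hE
  have hEsub : E ⊆ range (M+1) := Finset.filter_subset _ _
  have hprob : binomProb M x {n : ℕ | n ∈ E} = ∑ k ∈ E, binomPMF M x k := by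
    unfold ZSMG.binomProb
    calc ∑ k ∈ range (M+1), ({n : ℕ | n ∈ E}).indicator (binomPMF M x) k
        = ∑ k ∈ range (M+1), if k ∈ E then binomPMF M x k else 0 := by
          apply Finset.sum_congr rfl; intro k _; simp [Set.indicator_apply]
      _ = ∑ k ∈ (range (M+1)).filter (fun k => k ∈ E), binomPMF M x k :=
          (Finset.sum_filter _ _).symm
      _ = ∑ k ∈ E, binomPMF M x k := by
          rw [Finset.filter_mem_eq_inter, Finset.inter_eq_right.mpr hEsub]
  have hsplit := Finset.sum_filter_add_sum_filter_not (range (M+1))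
    (fun n : ℕ => |(n:ℝ) - c| ≤ τ) (binomPMF M x)
  have hnot : ∑ k ∈ (range (M+1)).filter (fun n : ℕ => ¬ |(n:ℝ) - c| ≤ τ), binomPMF M x k
      ≤ 2*Real.exp (-(t^2/(4*(M:ℝ)*(1-x)))) := by
    have hsub : (range (M+1)).filter (fun n : ℕ => ¬ |(n:ℝ) - c| ≤ τ) ⊆
        ((range (M+1)).filter (fun n : ℕ => (n:ℝ) ≤ c - τ)) ∪
        ((range (M+1)).filter (fun n : ℕ => c + τ ≤ (n:ℝ))) := by
      intro n hn
      simp only [Finset.mem_filter, Finset.mem_union, not_le] at hn ⊢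
      rcases abs_cases ((n:ℝ) - c) with ⟨he, _⟩ | ⟨he, _⟩
      · exact Or.inr ⟨hn.1, by linarith [hn.2, he.ge, he.le]⟩
      · exact Or.inl ⟨hn.1, by linarith [hn.2, he.ge, he.le]⟩
    have hdisj : Disjoint ((range (M+1)).filter (fun n : ℕ => (n:ℝ) ≤ c - τ))
        ((range (M+1)).filter (fun n : ℕ => c + τ ≤ (n:ℝ))) := by
      rw [Finset.disjoint_left]
      intro n h1' h2'
      simp only [Finset.mem_filter] at h1' h2'
      linarith [h1'.2, h2'.2]
    calc ∑ k ∈ (range (M+1)).filter (fun n : ℕ => ¬ |(n:ℝ) - c| ≤ τ), binomPMF M x k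
        ≤ ∑ k ∈ (((range (M+1)).filter (fun n : ℕ => (n:ℝ) ≤ c - τ)) ∪
            ((range (M+1)).filter (fun n : ℕ => c + τ ≤ (n:ℝ)))), binomPMF M x k :=
          Finset.sum_le_sum_of_subset_of_nonneg hsub
            (fun k _ _ => s13_binomPMF_nonneg hx0 hx1 k)
      _ = ∑ k ∈ (range (M+1)).filter (fun n : ℕ => (n:ℝ) ≤ c - τ), binomPMF M x k
          + ∑ k ∈ (range (M+1)).filter (fun n : ℕ => c + τ ≤ (n:ℝ)), binomPMF M x k :=
          Finset.sum_union hdisj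
      _ ≤ Real.exp (-(t^2/(4*(M:ℝ)*(1-x)))) + Real.exp (-(t^2/(4*(M:ℝ)*(1-x)))) :=
          add_le_add (s13_tail_low M x t (c-τ) hx0 hr ht hl h1)
            (s13_tail_high M x t (c+τ) hx0 hr ht hl h2)
      _ = 2*Real.exp (-(t^2/(4*(M:ℝ)*(1-x)))) := by ring
  linarith [hprob, hsplit, s13_sum_binomPMF M x]

private lemma s13_ratio (γ u d τ t : ℝ) (M n : ℕ)
    (hγ : 2/3 ≤ γ) (hγ1 : γ < 1) (hu : u = 1 - γ) (hd0 : 0 < d)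
    (hdu : 2*d ≤ u) (hu3 : u ≤ 1/3) (hτdef : τ = t + d*M)
    (hlog2 : (0.6931471803:ℝ) < Real.log 2)
    (hMd2 : 16*(M:ℝ)*d^2 ≤ (1/100)*u) (htd : 8*t*d ≤ (1/2)*u)
    (hnM : n ≤ M) (hnabs : |(n:ℝ) - γ*M| ≤ τ) :
    1/2 * binomPMF M (γ + d) n ≤ binomPMF M (γ - d) n := by
  have hu0 : 0 < u := by rw [hu]; linarith
  have hup : (1:ℝ) - (γ + d) = u - d := by rw [hu]; ring
  have huq : (1:ℝ) - (γ - d) = u + d := by rw [hu]; ring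
  have hMd0 : (0:ℝ) ≤ (M:ℝ) * d := mul_nonneg (Nat.cast_nonneg M) hd0.le
  have hq0 : (0:ℝ) < γ - d := by linarith [hdu, hu3, hu.le, hu.ge, hd0]
  have hp0 : (0:ℝ) < γ + d := by linarith [hd0]
  have h1p : (0:ℝ) < 1 - (γ + d) := by rw [hup]; linarith
  have h1q : (0:ℝ) < 1 - (γ - d) := by rw [huq]; linarith [hd0]
  obtain ⟨kR, hkRdef⟩ : ∃ x : ℝ, x = ((M - n : ℕ) : ℝ) := ⟨_, rfl⟩
  have hkR : kR = (M:ℝ) - n := by rw [hkRdef, Nat.cast_sub hnM]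
  have hτ0 : 0 ≤ τ := le_trans (abs_nonneg _) hnabs
  have hnabs' : |kR - u*M| ≤ τ := by
    have heq : kR - u*M = -((n:ℝ) - γ*M) := by rw [hkR, hu]; ring
    rw [heq, abs_neg]; exact hnabs
  have hpow : ∀ (y : ℝ), 0 < y → ∀ m : ℕ, y ^ m = Real.exp (m * Real.log y) := by
    intro y hy m
    rw [← Real.log_pow, Real.exp_log (pow_pos hy m)]
  have hC : (0:ℝ) ≤ (M.choose n : ℝ) := Nat.cast_nonneg _
  have e1 : binomPMF M (γ + d) n = (M.choose n : ℝ) *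
      Real.exp ((n:ℝ) * Real.log (γ+d) + kR * Real.log (1-(γ+d))) := by
    unfold ZSMG.binomPMF
    rw [hpow _ hp0 n, hpow _ h1p (M-n), mul_assoc, ← Real.exp_add, hkRdef]
  have e2 : binomPMF M (γ - d) n = (M.choose n : ℝ) *
      Real.exp ((n:ℝ) * Real.log (γ-d) + kR * Real.log (1-(γ-d))) := by
    unfold ZSMG.binomPMF
    rw [hpow _ hq0 n, hpow _ h1q (M-n), mul_assoc, ← Real.exp_add, hkRdef]
  rw [e1, e2]
  have hcore : (1:ℝ)/2 * Real.exp ((n:ℝ) * Real.log (γ+d) + kR * Real.log (1-(γ+d)))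
      ≤ Real.exp ((n:ℝ) * Real.log (γ-d) + kR * Real.log (1-(γ-d))) := by
    have h12 : (1:ℝ)/2 = Real.exp (-Real.log 2) := by
      rw [Real.exp_neg, Real.exp_log (by norm_num : (0:ℝ) < 2)]
      norm_num
    rw [h12, ← Real.exp_add]
    apply Real.exp_le_exp.mpr
    clear e1 e2 hpow hC h12 hkRdef hnabs hnM
    obtain ⟨L1, hL1def⟩ : ∃ x : ℝ, x = Real.log (γ+d) - Real.log (γ-d) := ⟨_, rfl⟩
    obtain ⟨L2, hL2def⟩ : ∃ x : ℝ, x = Real.log (1-(γ-d)) - Real.log (1-(γ+d)) := ⟨_, rfl⟩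
    have hL1a : (γ - d) * L1 ≤ 2*d := by
      rw [hL1def]
      have h := Real.log_le_sub_one_of_pos (div_pos hp0 hq0)
      rw [Real.log_div hp0.ne' hq0.ne'] at h
      have h2 := mul_le_mul_of_nonneg_left h hq0.le
      have h3 : (γ-d) * ((γ+d)/(γ-d) - 1) = 2*d := by
        linear_combination div_mul_cancel₀ (γ+d) hq0.ne'
      linarith
    have hL1b : 0 ≤ L1 := by
      rw [hL1def]
      exact sub_nonneg.mpr (Real.log_le_log hq0 (by linarith [hd0]))
    have hL2a : 2*d ≤ (u + d) * L2 := by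
      have hpre : 2*d ≤ ((1:ℝ)-(γ-d)) * L2 := by
        rw [hL2def]
        have h := Real.log_le_sub_one_of_pos (div_pos h1p h1q)
        rw [Real.log_div h1p.ne' h1q.ne'] at h
        have h2 := mul_le_mul_of_nonneg_left h h1q.le
        have h3 : (1-(γ-d)) * ((1-(γ+d))/(1-(γ-d)) - 1) = -(2*d) := by
          linear_combination div_mul_cancel₀ (1-(γ+d)) h1q.ne'
        linarith [h2, h3.le, h3.ge]
      rwa [huq] at hpre
    have hL2b : (u - d) * L2 ≤ 2*d := by
      rw [hL2def]
      have h := Real.log_le_sub_one_of_pos (div_pos h1q h1p)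
      rw [Real.log_div h1q.ne' h1p.ne'] at h
      have h2 := mul_le_mul_of_nonneg_left h h1p.le
      have h3 : (1-(γ+d)) * ((1-(γ-d))/(1-(γ+d)) - 1) = 2*d := by
        linear_combination div_mul_cancel₀ (1-(γ-d)) h1p.ne'
      have h4 : (1-(γ+d)) = u - d := by rw [hu]; ring
      nlinarith [h2, h3.le, h3.ge, h4.le, h4.ge]
    have hL2c : 0 ≤ L2 := by
      rw [hL2def]
      exact sub_nonneg.mpr (Real.log_le_log h1p (by linarith [hd0]))
    have hγd : (1:ℝ)/2 ≤ γ - d := by linarith [hdu, hu3, hu.le, hu.ge, hd0]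
    have hL1c : L1 ≤ 4*d := by
      linarith [hL1a, mul_nonneg (by linarith : (0:ℝ) ≤ γ - d - 1/2) hL1b]
    have hL2d : u*L2 ≤ 4*d := by
      linarith [hL2b, hL2c, mul_nonneg (by linarith : (0:ℝ) ≤ u - 2*d) hL2c]
    -- assemble
    have hnRk : (n:ℝ) = (M:ℝ) - kR := by rw [hkR]; ring
    have habs := abs_le.mp hnabs'
    have hS : u * (-(n:ℝ)*L1 + kR*L2) ≥ -(16*(M:ℝ)*d^2) - 8*t*d := by
      have hid : u * (-(n:ℝ)*L1 + kR*L2)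
          = -(γ*(M:ℝ)*u*L1) + (M:ℝ)*u^2*L2 + u*(kR - u*(M:ℝ))*(L1+L2) := by
        rw [hnRk, hu]; ring
      have hb1 : γ*(M:ℝ)*u*L1 ≤ (M:ℝ)*u*(2*d + 4*d^2) := by
        have hγL1 : γ*L1 ≤ 2*d + 4*d^2 := by
          linarith [hL1a, mul_le_mul_of_nonneg_left hL1c hd0.le]
        linarith [mul_le_mul_of_nonneg_left hγL1
          (by positivity : (0:ℝ) ≤ (M:ℝ)*u)]
      have hb2 : (M:ℝ)*u^2*L2 ≥ (M:ℝ)*(2*d*u - 4*d^2) := by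
        have hu2L2 : u^2*L2 ≥ 2*d*u - 4*d^2 := by
          linarith [mul_le_mul_of_nonneg_left hL2a hu0.le,
            mul_le_mul_of_nonneg_left hL2d hd0.le]
        linarith [mul_le_mul_of_nonneg_left hu2L2 (Nat.cast_nonneg M)]
      have hb3 : u*(kR - u*(M:ℝ))*(L1+L2) ≥ -(8*t*d) - 8*(M:ℝ)*d^2 := by
        have hups : u*(L1+L2) ≤ 8*d := by
          linarith [mul_le_mul_of_nonneg_left hL1c hu0.le, hL2d,
            mul_nonneg hd0.le (by linarith : (0:ℝ) ≤ 1 - u)]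
        have h0 : 0 ≤ u*(L1+L2) := mul_nonneg hu0.le (by linarith [hL1b, hL2c])
        have hm : (-τ)*(u*(L1+L2)) ≤ (kR - u*(M:ℝ))*(u*(L1+L2)) :=
          mul_le_mul_of_nonneg_right habs.1 h0
        have hτ8 : τ*(u*(L1+L2)) ≤ τ*(8*d) := mul_le_mul_of_nonneg_left hups hτ0
        have hτd : τ*(8*d) = 8*t*d + 8*(M:ℝ)*d^2 := by rw [hτdef]; ring
        linarith [hm, hτ8, hτd.le, hτd.ge]
      linarith [hid.le, hid.ge, hb1, hb2, hb3,
        mul_nonneg (mul_nonneg hMd0 hd0.le) (by linarith : (0:ℝ) ≤ 1 - u)]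
    have hfin : -Real.log 2 ≤ -(n:ℝ)*L1 + kR*L2 := by
      have h1 : u * (-(n:ℝ)*L1 + kR*L2) ≥ -(Real.log 2) * u := by
        linarith [hS, hMd2, htd,
          mul_le_mul_of_nonneg_right hlog2.le hu0.le]
      by_contra hcon
      push_neg at hcon
      have h6 := mul_lt_mul_of_pos_left hcon hu0
      linarith [h1, h6]
    have e : -(n:ℝ)*L1 + kR*L2 = ((n:ℝ) * Real.log (γ-d) + kR * Real.log (1-(γ-d)))
        - ((n:ℝ) * Real.log (γ+d) + kR * Real.log (1-(γ+d))) := by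
      rw [hL1def, hL2def]; ring
    linarith [hfin, e.le, e.ge]
  calc 1/2 * ((M.choose n : ℝ) *
        Real.exp ((n:ℝ) * Real.log (γ+d) + kR * Real.log (1-(γ+d))))
      = (M.choose n : ℝ) * (1/2 *
        Real.exp ((n:ℝ) * Real.log (γ+d) + kR * Real.log (1-(γ+d)))) := by ring
    _ ≤ (M.choose n : ℝ) *
        Real.exp ((n:ℝ) * Real.log (γ-d) + kR * Real.log (1-(γ-d))) :=
        mul_le_mul_of_nonneg_left hcore hC


end Statement13Aux

set_option maxHeartbeats 1000000 in
open ZSMG in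
/-- existence of a high-probability set `E_M` on which the
binomial likelihood ratio between `q` and `p` is at least `1/2`. -/
theorem statement13 :
    ∃ c₃ c₄ : ℝ, 0 < c₃ ∧ 0 < c₄ ∧
      ∀ (A : ℕ), 2 ≤ A → ∀ γ : ℝ, 2 / 3 ≤ γ → γ < 1 →
      ∀ ε : ℝ, 0 < ε → ε ≤ 1 / (42 * (1 - γ)) →
      ∀ M : ℕ, 0 < M →
        c₃ * Real.log A / (1 - γ) ≤ (M : ℝ) →
        (M : ℝ) ≤ c₄ / ((1 - γ) ^ 3 * ε ^ 2 * Real.log A) →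
        ∃ E : Finset ℕ, E ⊆ Finset.range (M + 1) ∧
          1 - 2 / (A : ℝ) ^ 4 ≤
            binomProb M (γ + 14 * (1 - γ) ^ 2 * ε / γ) {n : ℕ | n ∈ E} ∧
          1 - 2 / (A : ℝ) ^ 4 ≤
            binomProb M (γ - 14 * (1 - γ) ^ 2 * ε / γ) {n : ℕ | n ∈ E} ∧
          ∀ n ∈ E,
            (1 / 2) * binomPMF M (γ + 14 * (1 - γ) ^ 2 * ε / γ) n ≤
              binomPMF M (γ - 14 * (1 - γ) ^ 2 * ε / γ) n := by
  classical
  refine ⟨24, 1/100000000, by norm_num, by norm_num, ?_⟩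
  intro A hA γ hγ hγ1 ε hε hεu M hM hMlo hMhi
  have hAR : (2:ℝ) ≤ A := by exact_mod_cast hA
  have hA0 : (0:ℝ) < A := by linarith
  have hlog2 : (0.6931471803:ℝ) < Real.log 2 := Real.log_two_gt_d9
  have hlogA : Real.log 2 ≤ Real.log A := Real.log_le_log (by norm_num) hAR
  have hlogA0 : (0:ℝ) < Real.log A := by linarith
  have hγ0 : (0:ℝ) < γ := by linarith
  obtain ⟨d, hd⟩ : ∃ x : ℝ, x = 14 * (1 - γ) ^ 2 * ε / γ := ⟨_, rfl⟩
  rw [← hd]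
  obtain ⟨u, hu⟩ : ∃ x : ℝ, x = 1 - γ := ⟨_, rfl⟩
  have hu0 : 0 < u := by rw [hu]; linarith
  have hu3 : u ≤ 1/3 := by rw [hu]; linarith
  have h1γ : (0:ℝ) < 1 - γ := by linarith
  have hd0 : 0 < d := by
    rw [hd]
    exact div_pos (mul_pos (mul_pos (by norm_num) (pow_pos h1γ 2)) hε) hγ0
  have hdγ : d * γ = 14 * u^2 * ε := by rw [hd, hu]; field_simp
  have hε42 : ε * (42 * u) ≤ 1 := by
    rw [hu]; exact (le_div_iff₀ (by nlinarith [h1γ] : (0:ℝ) < 42*(1-γ))).mp hεu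
  have hdu : 2 * d ≤ u := by
    linarith [mul_le_mul_of_nonneg_left hγ hd0.le, hdγ,
      mul_le_mul_of_nonneg_left hε42 hu0.le]
  have hMR : (1:ℝ) ≤ M := by exact_mod_cast hM
  have hMu : 24 * Real.log A ≤ (M:ℝ) * u := by
    rw [hu]
    have := (div_le_iff₀ (by linarith : (0:ℝ) < 1 - γ)).mp hMlo
    linarith
  have hN1 : (M:ℝ) * (u^3 * ε^2 * Real.log A) ≤ 1/100000000 := by
    rw [hu]
    have hpos : (0:ℝ) < (1-γ)^3 * ε^2 * Real.log A := by
      have : (0:ℝ) < 1 - γ := by linarith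
      positivity
    have := (le_div_iff₀ hpos).mp hMhi
    linarith
  obtain ⟨t, htdef⟩ : ∃ x : ℝ, x = Real.sqrt (24 * M * u * Real.log A) := ⟨_, rfl⟩
  have htarg : (0:ℝ) ≤ 24 * M * u * Real.log A := by positivity
  have ht2 : t^2 = 24 * M * u * Real.log A := by rw [htdef]; exact Real.sq_sqrt htarg
  have ht0 : 0 < t := by rw [htdef]; exact Real.sqrt_pos.mpr (by positivity)
  have htMu : t ≤ (M:ℝ) * u := by
    have h1 : 24 * (M:ℝ) * u * Real.log A ≤ ((M:ℝ)*u)^2 := by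
      linarith [mul_le_mul_of_nonneg_right hMu (by positivity : (0:ℝ) ≤ (M:ℝ)*u)]
    have h2 := Real.sqrt_le_sqrt h1
    rw [Real.sqrt_sq (by positivity : (0:ℝ) ≤ (M:ℝ)*u)] at h2
    rw [htdef]
    exact h2
  obtain ⟨τ, hτdef⟩ : ∃ x : ℝ, x = t + d * M := ⟨_, rfl⟩
  have hMd0 : (0:ℝ) ≤ (M:ℝ) * d := mul_nonneg (Nat.cast_nonneg M) hd0.le
  have hτ0 : 0 < τ := by rw [hτdef]; linarith [hMd0, ht0]
  have hup : (1:ℝ) - (γ + d) = u - d := by rw [hu]; ring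
  have huq : (1:ℝ) - (γ - d) = u + d := by rw [hu]; ring
  have hMud : (M:ℝ) * (2*d) ≤ (M:ℝ) * u :=
    mul_le_mul_of_nonneg_left hdu (Nat.cast_nonneg M)
  have hMlogA : (0:ℝ) ≤ (M:ℝ) * Real.log A :=
    mul_nonneg (Nat.cast_nonneg M) hlogA0.le
  have hMulogA : (0:ℝ) ≤ (M:ℝ) * u * Real.log A := mul_nonneg
    (mul_nonneg (Nat.cast_nonneg M) hu0.le) hlogA0.le
  have hMdlogA : (0:ℝ) ≤ (M:ℝ) * d * Real.log A := mul_nonneg hMd0 hlogA0.le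
  have hexp2 : ∀ x : ℝ, 0 < 1 - x → 1 - x ≤ 3*u/2 →
      2 * Real.exp (-(t^2/(4*(M:ℝ)*(1-x)))) ≤ 2/(A:ℝ)^4 := by
    intro x hrx hrx2
    have harg : 4 * Real.log A ≤ t^2 / (4*(M:ℝ)*(1-x)) := by
      rw [le_div_iff₀ (by positivity), ht2]
      linarith [mul_nonneg (mul_nonneg (Nat.cast_nonneg M)
        (by linarith : (0:ℝ) ≤ 3*u/2 - (1-x))) hlogA0.le]
    have h1 : Real.exp (-(t^2/(4*(M:ℝ)*(1-x)))) ≤ Real.exp (-(4*Real.log A)) :=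
      Real.exp_le_exp.mpr (by linarith)
    have h2 : Real.exp (-(4*Real.log A)) = 1/(A:ℝ)^4 := by
      rw [Real.exp_neg, show (4:ℝ)*Real.log A = ((4:ℕ):ℝ)*Real.log A by norm_num,
        Real.exp_nat_mul, Real.exp_log hA0, one_div]
    rw [div_eq_mul_one_div 2 ((A:ℝ)^4)]
    linarith
  refine ⟨(Finset.range (M+1)).filter (fun n : ℕ => |(n:ℝ) - γ*M| ≤ τ),
    Finset.filter_subset _ _, ?_, ?_, ?_⟩
  · -- concentration for p = γ + d
    have hr : (0:ℝ) < 1 - (γ + d) := by rw [hup]; linarith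
    have hkey := s13_conc M (γ + d) (γ*M) τ t (by linarith) (by linarith)
      hr ht0 hτ0 ?_ ?_ ?_
    · refine le_trans ?_ hkey
      have := hexp2 (γ + d) hr (by rw [hup]; linarith)
      linarith
    · rw [hup]; linarith [htMu, hMud]
    · linarith [hMd0]
    · linarith
  · -- concentration for q = γ - d
    have hr : (0:ℝ) < 1 - (γ - d) := by rw [huq]; linarith
    have hkey := s13_conc M (γ - d) (γ*M) τ t (by linarith [hdu, hu3, hd0, hu.le, hu.ge])
      (by linarith) hr ht0 hτ0 ?_ ?_ ?_
    · refine le_trans ?_ hkey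
      have := hexp2 (γ - d) hr (by rw [huq]; linarith)
      linarith
    · rw [huq]; linarith [htMu, hMd0]
    · linarith
    · linarith [hMd0]
  · -- likelihood ratio bound on E
    intro n hn
    obtain ⟨hnr, hnabs⟩ := Finset.mem_filter.mp hn
    have hnM : n ≤ M := Nat.lt_succ_iff.mp (Finset.mem_range.mp hnr)
    clear hn hnr hexp2 htdef hMlo hMhi hεu htMu hMu hε42 htarg hMud
    clear hMulogA hMdlogA hMlogA hup huq hAR hA0 hτ0 hMd0 hMR hM hA
    -- numeric smallness
    have hd21 : d ≤ 21 * u^2 * ε := by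
      linarith [mul_le_mul_of_nonneg_left hγ hd0.le, hdγ]
    have hsqd : d^2 ≤ 441 * u^4 * ε^2 := by
      have := mul_self_le_mul_self hd0.le hd21
      calc d^2 = d*d := sq d
        _ ≤ (21*u^2*ε)*(21*u^2*ε) := this
        _ = 441 * u^4 * ε^2 := by ring
    have hY : (0:ℝ) ≤ (M:ℝ) * (u^3*ε^2) := by positivity
    have hY2 : (M:ℝ) * (u^3*ε^2) ≤ 2/100000000 := by
      linarith [mul_le_mul_of_nonneg_left (le_trans hlog2.le hlogA) hY, hN1]
    have hMd2 : 16*(M:ℝ)*d^2 ≤ (1/100)*u := by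
      have t1 : (M:ℝ)*d^2 ≤ (M:ℝ)*(441*u^4*ε^2) :=
        mul_le_mul_of_nonneg_left hsqd (Nat.cast_nonneg M)
      have t2 : (M:ℝ)*(441*u^4*ε^2) = 441*u*((M:ℝ)*(u^3*ε^2)) := by ring
      have t3 : 441*u*((M:ℝ)*(u^3*ε^2)) ≤ 441*u*(2/100000000) :=
        mul_le_mul_of_nonneg_left hY2 (by positivity)
      linarith [t1, t2.le, t2.ge, t3, hu0.le]
    have htd : 8*t*d ≤ (1/2)*u := by
      have hsq : (t*d)^2 ≤ (11/1000*u)^2 := by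
        have e : (t*d)^2 = (24*(M:ℝ)*u*Real.log A) * d^2 := by rw [mul_pow, ht2]
        have t1 : (24*(M:ℝ)*u*Real.log A) * d^2
            ≤ (24*(M:ℝ)*u*Real.log A) * (441*u^4*ε^2) :=
          mul_le_mul_of_nonneg_left hsqd (by positivity)
        have t2 : (24*(M:ℝ)*u*Real.log A) * (441*u^4*ε^2)
            = 10584*u^2*((M:ℝ)*(u^3*ε^2*Real.log A)) := by ring
        have t3 : 10584*u^2*((M:ℝ)*(u^3*ε^2*Real.log A))
            ≤ 10584*u^2*(1/100000000) :=
          mul_le_mul_of_nonneg_left hN1 (by positivity)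
        linarith [e.le, e.ge, t1, t2.le, t2.ge, t3, sq_nonneg u]
      have h5 : t*d ≤ 11/1000*u := by
        by_contra hcon
        push_neg at hcon
        have h6 := mul_lt_mul_of_pos_left hcon hu0
        linarith [hsq, sq_nonneg (t*d - 11/1000*u), h6]
      linarith [h5, hu0.le]
    exact s13_ratio γ u d τ t M n hγ hγ1 hu hd0 hdu hu3 hτdef hlog2
      hMd2 htd hnM hnabs
end
end

section
/- Let γ ∈ [1/2,1). For any (s,a,b) ∈ 𝒮×𝒜×ℬ and any V₁, V₂ : 𝒮 → [0, 1/(1−γ)], the penalty satisfies |β(s,a,b;V₁) − β(s,a,b;V₂)| ≤ 2·‖V₁ − V₂‖_∞. -/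
open scoped BigOperators ENNReal Classical

noncomputable section

section Aux

open ZSMG

variable {𝒮 : Type} [Fintype 𝒮] [Nonempty 𝒮]

lemma varP_centered (p V : 𝒮 → ℝ) (hp1 : ∑ t, p t = 1) :
    varP p V = ∑ t, p t * (V t - Pexp p V) ^ 2 := by
  simp only [varP, Pexp]
  have h : ∑ t, p t * (V t - ∑ u, p u * V u) ^ 2
      = ∑ t, (p t * (V t * V t) - 2 * (∑ u, p u * V u) * (p t * V t)
          + (∑ u, p u * V u) ^ 2 * p t) := by
    apply Finset.sum_congr rfl; intro t _; ring
  rw [h, Finset.sum_add_distrib, Finset.sum_sub_distrib, ← Finset.mul_sum,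
    ← Finset.mul_sum, hp1]
  ring

lemma varP_nonneg (p V : 𝒮 → ℝ) (hp0 : ∀ t, 0 ≤ p t) (hp1 : ∑ t, p t = 1) :
    0 ≤ varP p V := by
  rw [varP_centered p V hp1]
  exact Finset.sum_nonneg fun t _ => mul_nonneg (hp0 t) (sq_nonneg _)

lemma sqrt_varP_lipschitz (p V₁ V₂ : 𝒮 → ℝ) (hp0 : ∀ t, 0 ≤ p t)
    (hp1 : ∑ t, p t = 1) (M : ℝ) (hM : ∀ t, |V₁ t - V₂ t| ≤ M) :
    Real.sqrt (varP p V₁) ≤ Real.sqrt (varP p V₂) + M := by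
  have hM0 : 0 ≤ M := le_trans (abs_nonneg _) (hM (Classical.arbitrary 𝒮))
  set W : 𝒮 → ℝ := fun t => V₁ t - V₂ t with hW
  -- variance of W is at most M^2
  have hW2 : varP p W ≤ M ^ 2 := by
    have h1 : varP p W ≤ ∑ t, p t * (W t * W t) := by
      simpa [varP, Pexp] using sub_le_self (∑ t, p t * (W t * W t)) (sq_nonneg (Pexp p W))
    have h2 : ∑ t, p t * (W t * W t) ≤ M ^ 2 := by
      calc ∑ t, p t * (W t * W t) ≤ ∑ t, p t * M ^ 2 := by
            apply Finset.sum_le_sum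
            intro t _
            apply mul_le_mul_of_nonneg_left _ (hp0 t)
            have := mul_self_le_mul_self (abs_nonneg (W t)) (hM t)
            rw [abs_mul_abs_self] at this
            nlinarith
        _ = M ^ 2 := by rw [← Finset.sum_mul, hp1, one_mul]
    linarith
  set m₂ := Pexp p V₂ with hm₂
  set mW := Pexp p W with hmW
  set cov := ∑ t, p t * ((V₂ t - m₂) * (W t - mW)) with hcov
  have hm1 : Pexp p V₁ = m₂ + mW := by
    simp only [hm₂, hmW, Pexp, hW, mul_sub, Finset.sum_sub_distrib]
    ring
  have hdecomp : varP p V₁ = varP p V₂ + 2 * cov + varP p W := by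
    rw [varP_centered p V₁ hp1, varP_centered p V₂ hp1, varP_centered p W hp1, hm1,
      ← hm₂, ← hmW, hcov]
    have e : ∀ t : 𝒮, p t * (V₁ t - (m₂ + mW)) ^ 2
        = p t * (V₂ t - m₂) ^ 2 + 2 * (p t * ((V₂ t - m₂) * (W t - mW)))
          + p t * (W t - mW) ^ 2 := by
      intro t
      have hwt : W t = V₁ t - V₂ t := rfl
      rw [hwt]; ring
    calc ∑ t, p t * (V₁ t - (m₂ + mW)) ^ 2
        = ∑ t, (p t * (V₂ t - m₂) ^ 2 + 2 * (p t * ((V₂ t - m₂) * (W t - mW)))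
            + p t * (W t - mW) ^ 2) := Finset.sum_congr rfl fun t _ => e t
      _ = ∑ t, p t * (V₂ t - m₂) ^ 2 + 2 * ∑ t, p t * ((V₂ t - m₂) * (W t - mW))
            + ∑ t, p t * (W t - mW) ^ 2 := by
          rw [Finset.sum_add_distrib, Finset.sum_add_distrib, ← Finset.mul_sum]
  have hv2 : 0 ≤ varP p V₂ := varP_nonneg p V₂ hp0 hp1
  have hvW : 0 ≤ varP p W := varP_nonneg p W hp0 hp1
  set σ₂ := Real.sqrt (varP p V₂) with hσ₂
  set σW := Real.sqrt (varP p W) with hσW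
  have hσ₂0 : 0 ≤ σ₂ := Real.sqrt_nonneg _
  have hσW0 : 0 ≤ σW := Real.sqrt_nonneg _
  have hσ₂sq : σ₂ ^ 2 = varP p V₂ := Real.sq_sqrt hv2
  have hσWsq : σW ^ 2 = varP p W := Real.sq_sqrt hvW
  -- Cauchy-Schwarz: cov ≤ σ₂ * σW
  have hcovle : cov ≤ σ₂ * σW := by
    have key := Real.sum_mul_le_sqrt_mul_sqrt Finset.univ
      (fun t => Real.sqrt (p t) * (V₂ t - m₂)) (fun t => Real.sqrt (p t) * (W t - mW))
    have e1 : ∑ t : 𝒮, (Real.sqrt (p t) * (V₂ t - m₂)) * (Real.sqrt (p t) * (W t - mW))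
        = cov := by
      rw [hcov]
      apply Finset.sum_congr rfl
      intro t _
      have h : Real.sqrt (p t) * Real.sqrt (p t) = p t := Real.mul_self_sqrt (hp0 t)
      rw [show (Real.sqrt (p t) * (V₂ t - m₂)) * (Real.sqrt (p t) * (W t - mW))
          = (Real.sqrt (p t) * Real.sqrt (p t)) * ((V₂ t - m₂) * (W t - mW)) from by ring, h]
    have e2 : ∑ t : 𝒮, (Real.sqrt (p t) * (V₂ t - m₂)) ^ 2 = varP p V₂ := by
      rw [varP_centered p V₂ hp1, ← hm₂]
      exact Finset.sum_congr rfl fun t _ => by rw [mul_pow, Real.sq_sqrt (hp0 t)]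
    have e3 : ∑ t : 𝒮, (Real.sqrt (p t) * (W t - mW)) ^ 2 = varP p W := by
      rw [varP_centered p W hp1, ← hmW]
      exact Finset.sum_congr rfl fun t _ => by rw [mul_pow, Real.sq_sqrt (hp0 t)]
    rw [e1, e2, e3] at key
    exact key
  have h1 : varP p V₁ ≤ (σ₂ + σW) ^ 2 := by nlinarith
  have h2 : Real.sqrt (varP p V₁) ≤ σ₂ + σW := by
    calc Real.sqrt (varP p V₁) ≤ Real.sqrt ((σ₂ + σW) ^ 2) := Real.sqrt_le_sqrt h1
      _ = σ₂ + σW := Real.sqrt_sq (by linarith)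
  have hσWle : σW ≤ M := by
    calc σW ≤ Real.sqrt (M ^ 2) := Real.sqrt_le_sqrt hW2
      _ = M := Real.sqrt_sq hM0
  linarith

end Aux

open ZSMG in
/-- the penalty `β(s,a,b;·)` is `2`-Lipschitz in the value
function with respect to the sup norm. -/
theorem statement18 {𝒮 𝒜 ℬ : Type} [Fintype 𝒮] [Fintype 𝒜] [Fintype ℬ]
    [Nonempty 𝒮] [Nonempty 𝒜] [Nonempty ℬ]
    (γ δ Cb : ℝ) (hγl : 1 / 2 ≤ γ) (hγu : γ < 1) (hδ : δ ∈ Set.Ioo (0 : ℝ) 1)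
    (hCb : 1 ≤ Cb) (N : ℕ) (hN : 1 ≤ N)
    (n : 𝒮 → 𝒜 → ℬ → ℕ) (Ph : 𝒮 → 𝒜 → ℬ → 𝒮 → ℝ) (hPh : IsKernel Ph)
    (s : 𝒮) (a : 𝒜) (b : ℬ) (V₁ V₂ : 𝒮 → ℝ)
    (hV₁ : ∀ s', V₁ s' ∈ Set.Icc (0 : ℝ) (1 / (1 - γ)))
    (hV₂ : ∀ s', V₂ s' ∈ Set.Icc (0 : ℝ) (1 / (1 - γ))) :
    |penalty γ δ Cb N (n s a b) (Ph s a b) V₁ - penalty γ δ Cb N (n s a b) (Ph s a b) V₂|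
      ≤ 2 * supNormS (fun s' => V₁ s' - V₂ s') := by
  obtain ⟨hp0, hp1⟩ := hPh s a b
  set p := Ph s a b with hp
  set M := supNormS (fun s' => V₁ s' - V₂ s') with hMdef
  have hbdd : BddAbove (Set.range fun s' => |V₁ s' - V₂ s'|) :=
    Set.Finite.bddAbove (Set.finite_range _)
  have hMle : ∀ t, |V₁ t - V₂ t| ≤ M := by
    intro t
    rw [hMdef]
    simpa [supNormS] using le_ciSup hbdd t
  have hM0 : 0 ≤ M := le_trans (abs_nonneg _) (hMle (Classical.arbitrary 𝒮))
  have h1γ : 0 < 1 - γ := by linarith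
  by_cases hn : n s a b = 0
  · simp only [penalty, if_pos hn, sub_self, abs_zero]
    linarith
  · simp only [penalty, if_neg hn, add_sub_add_right_eq_sub]
    have hnpos : 0 < ((n s a b : ℕ) : ℝ) := by
      exact_mod_cast Nat.pos_of_ne_zero hn
    set c := Cb * Real.log ((N : ℝ) / ((1 - γ) * δ)) with hc
    have hd0 : 0 < (1 - γ) * δ := mul_pos h1γ hδ.1
    have hN1 : (1 : ℝ) ≤ (N : ℝ) := by exact_mod_cast hN
    have harg : 1 ≤ (N : ℝ) / ((1 - γ) * δ) := by
      rw [le_div_iff₀ hd0, one_mul]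
      nlinarith [hδ.2, hδ.1.le]
    have hlog : 0 ≤ Real.log ((N : ℝ) / ((1 - γ) * δ)) := Real.log_nonneg harg
    have hc0 : 0 ≤ c := mul_nonneg (by linarith) hlog
    set K : ℝ := 1 / (1 - γ) with hK
    set B : ℝ := 2 * Cb * Real.log ((N : ℝ) / ((1 - γ) * δ)) / ((1 - γ) * (n s a b : ℝ))
      with hB
    set A₁ := Real.sqrt (c * varP p V₁ / (n s a b : ℝ)) with hA₁
    set A₂ := Real.sqrt (c * varP p V₂ / (n s a b : ℝ)) with hA₂
    by_cases hKB : K ≤ B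
    · rw [min_eq_right (le_trans hKB (le_max_right A₁ B)),
        min_eq_right (le_trans hKB (le_max_right A₂ B)), sub_self, abs_zero]
      linarith
    · push_neg at hKB
      have hB' : 2 * c / ((1 - γ) * (n s a b : ℝ)) < 1 / (1 - γ) := by
        have : B = 2 * c / ((1 - γ) * (n s a b : ℝ)) := by rw [hB, hc]; ring
        rw [← this]; exact hKB
      have h2cn : 2 * c < (n s a b : ℝ) := by
        rw [div_lt_div_iff₀ (by positivity) h1γ] at hB'
        nlinarith
      have hcn4 : c / (n s a b : ℝ) ≤ 4 := by
        rw [div_le_iff₀ hnpos]; nlinarith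
      have hsq2 : Real.sqrt (c / (n s a b : ℝ)) ≤ 2 := by
        have h := Real.sqrt_le_sqrt hcn4
        rwa [show (4 : ℝ) = 2 ^ 2 by norm_num, Real.sqrt_sq (by norm_num : (0:ℝ) ≤ 2)] at h
      have hA : ∀ V : 𝒮 → ℝ, Real.sqrt (c * varP p V / (n s a b : ℝ))
          = Real.sqrt (c / (n s a b : ℝ)) * Real.sqrt (varP p V) := by
        intro V
        rw [show c * varP p V / (n s a b : ℝ) = (c / (n s a b : ℝ)) * varP p V by ring,
          Real.sqrt_mul (by positivity)]
      have hσdiff : |Real.sqrt (varP p V₁) - Real.sqrt (varP p V₂)| ≤ M := by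
        rw [abs_sub_le_iff]
        constructor
        · linarith [sqrt_varP_lipschitz p V₁ V₂ hp0 hp1 M hMle]
        · refine sub_le_iff_le_add.mpr ?_
          have := sqrt_varP_lipschitz p V₂ V₁ hp0 hp1 M
            (fun t => by rw [abs_sub_comm]; exact hMle t)
          linarith
      have hAdiff : |A₁ - A₂| ≤ 2 * M := by
        rw [hA₁, hA₂, hA V₁, hA V₂, ← mul_sub, abs_mul,
          abs_of_nonneg (Real.sqrt_nonneg _)]
        exact mul_le_mul hsq2 hσdiff (abs_nonneg _) (by norm_num)
      calc |min (max A₁ B) K - min (max A₂ B) K|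
          ≤ max |max A₁ B - max A₂ B| |K - K| := abs_min_sub_min_le_max _ _ _ _
        _ = |max A₁ B - max A₂ B| := by simp
        _ ≤ max |A₁ - A₂| |B - B| := abs_max_sub_max_le_max _ _ _ _
        _ = |A₁ - A₂| := by simp
        _ ≤ 2 * M := hAdiff
end
end

section
/- Let γ ∈ [1/2,1), N ≥ 1 an integer, and define the iterates Q⁻₀ ≡ 0, Q⁻_t = T̂⁻(Q⁻_{t−1}) and Q⁺₀ ≡ 1/(1−γ), Q⁺_t = T̂⁺(Q⁺_{t−1}) for t ≥ 1, and let Q_pe^{−⋆}, Q_pe^{+⋆} be the unique fixed points of T̂⁻, T̂⁺ in {Q : 𝒮×𝒜×ℬ → [0, 1/(1−γ)]}, with associated value functions V_pe^{−⋆}, V_pe^{+⋆}. Then: (i) for every t ≥ 0, Q⁻_t ≤ Q_pe^{−⋆} and Q⁺_t ≥ Q_pe^{+⋆} entrywise; and (ii) for T = ⌈log(N/(1−γ))/log(1/γ)⌉, one has ‖Q⁻_T − Q_pe^{−⋆}‖_∞ ≤ γ^T/(1−γ) ≤ 1/N and ‖Q⁺_T − Q_pe^{+⋆}‖_∞ ≤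 γ^T/(1−γ) ≤ 1/N, and hence the associated value functions satisfy ‖V_{Q⁻_T} − V_pe^{−⋆}‖_∞ ≤ 1/N and ‖V_{Q⁺_T} − V_pe^{+⋆}‖_∞ ≤ 1/N. -/
open scoped BigOperators ENNReal Classical

noncomputable section

/-!
Both pessimistic operators are monotone and `γ`-contracting on ordered pairs in the box
`[0, 1/(1-γ)]`: if `Q₁ ≤ Q₂ ≤ Q₁ + m` there, then `T Q₁ ≤ T Q₂ ≤ T Q₁ + γ m`. For the backup
`r̂ + γ P̂ V_Q` this holds because the matrix-game value is monotone and commutes with adding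
constants. The penalty moves too, but by less than the backup does: with `u = P̂(V₂ - V₁) ∈ [0, m]`,
the difference of the variances is the covariance `Cov(V₂ - V₁, V₁ + V₂)`, which is at most
`2u/(1-γ)` and, applying the same bound to `m - (V₂ - V₁)`, at most `2(m - u)/(1-γ)`. The clipped
square root `x ↦ min (max √(K x) (2K/(1-γ))) (1/(1-γ))` is `(1-γ)/4`-Lipschitz, so the penalty
changes by at most `min(u, m - u)/2 ≤ γ min(u, m - u)`, using `γ ≥ 1/2`.

The iterates start from `0` (resp. `1/(1-γ)`), on one side of the fixed point and within
`1/(1-γ)` of it, so they stay on that side within `γ^t/(1-γ)`; the choice of `T` makes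
`γ^T ≤ (1-γ)/N`.
-/

namespace ZSMG

section MatrixGame

variable {𝒜 ℬ : Type} [Fintype 𝒜] [Fintype ℬ]

theorem pay_const {w : 𝒜 → ℝ} {z : ℬ → ℝ} (hw : w ∈ stdSimplex ℝ 𝒜) (hz : z ∈ stdSimplex ℝ ℬ)
    (k : ℝ) : pay (fun _ _ => k) w z = k := by
  simp [pay, ← Finset.sum_mul, ← Finset.mul_sum, hw.2, hz.2]

theorem pay_le_pay_add {M₁ M₂ : 𝒜 → ℬ → ℝ} {k : ℝ} {w : 𝒜 → ℝ} {z : ℬ → ℝ}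
    (hw : w ∈ stdSimplex ℝ 𝒜) (hz : z ∈ stdSimplex ℝ ℬ) (h : ∀ a b, M₁ a b ≤ M₂ a b + k) :
    pay M₁ w z ≤ pay M₂ w z + k := by
  calc pay M₁ w z ≤ pay (fun a b => M₂ a b + k) w z :=
        Finset.sum_le_sum fun a _ => Finset.sum_le_sum fun b _ =>
          mul_le_mul_of_nonneg_left (h a b) (mul_nonneg (hw.1 a) (hz.1 b))
    _ = pay M₂ w z + pay (fun _ _ => k) w z := by simp only [pay, mul_add, Finset.sum_add_distrib]
    _ = pay M₂ w z + k := by rw [pay_const hw hz]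

theorem bddBelow_range_pay (M : 𝒜 → ℬ → ℝ) {w : 𝒜 → ℝ} (hw : w ∈ stdSimplex ℝ 𝒜) :
    BddBelow (Set.range fun z : stdSimplex ℝ ℬ => pay M w z.1) := by
  obtain ⟨lo, hlo⟩ := Finite.bddBelow_range fun ab : 𝒜 × ℬ => M ab.1 ab.2
  refine ⟨lo, Set.forall_mem_range.2 fun z => ?_⟩
  have := pay_le_pay_add (k := 0) hw z.2 fun a b => by simpa using hlo ⟨(a, b), rfl⟩
  rwa [pay_const hw z.2, add_zero] at this

variable [Nonempty ℬ]

theorem bddAbove_range_iInf_pay (M : 𝒜 → ℬ → ℝ) :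
    BddAbove (Set.range fun w : stdSimplex ℝ 𝒜 => ⨅ z : stdSimplex ℝ ℬ, pay M w.1 z.1) := by
  obtain ⟨hi, hhi⟩ := Finite.bddAbove_range fun ab : 𝒜 × ℬ => M ab.1 ab.2
  refine ⟨hi, Set.forall_mem_range.2 fun w => ?_⟩
  obtain ⟨z⟩ := (inferInstance : Nonempty (stdSimplex ℝ ℬ))
  refine (ciInf_le (bddBelow_range_pay M w.2) z).trans ?_
  have := pay_le_pay_add (k := 0) w.2 z.2 fun a b => by simpa using hhi ⟨(a, b), rfl⟩
  rwa [pay_const w.2 z.2, add_zero] at this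

variable [Nonempty 𝒜] {𝒮 : Type}

theorem valQ_const (k : ℝ) (s : 𝒮) : valQ (fun (_ : 𝒮) (_ : 𝒜) (_ : ℬ) => k) s = k := by
  have h : ∀ (w : stdSimplex ℝ 𝒜) (z : stdSimplex ℝ ℬ), pay (fun _ _ => k) w.1 z.1 = k :=
    fun w z => pay_const w.2 z.2 k
  simp [valQ, h]

theorem valQ_le_valQ_add {Q₁ Q₂ : 𝒮 → 𝒜 → ℬ → ℝ} {s : 𝒮} {k : ℝ}
    (h : ∀ a b, Q₁ s a b ≤ Q₂ s a b + k) : valQ Q₁ s ≤ valQ Q₂ s + k := by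
  refine ciSup_le fun w => ?_
  refine le_trans ?_ (add_le_add_left (le_ciSup (bddAbove_range_iInf_pay (Q₂ s)) w) k)
  rw [← sub_le_iff_le_add]
  refine le_ciInf fun z => sub_le_iff_le_add.2 ?_
  exact (ciInf_le (bddBelow_range_pay (Q₁ s) w.2) z).trans (pay_le_pay_add w.2 z.2 h)

theorem valQ_mono {Q₁ Q₂ : 𝒮 → 𝒜 → ℬ → ℝ} {s : 𝒮} (h : ∀ a b, Q₁ s a b ≤ Q₂ s a b) :
    valQ Q₁ s ≤ valQ Q₂ s := by
  simpa using valQ_le_valQ_add (k := 0) fun a b => by simpa using h a b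

theorem le_valQ {Q : 𝒮 → 𝒜 → ℬ → ℝ} {s : 𝒮} {k : ℝ} (h : ∀ a b, k ≤ Q s a b) :
    k ≤ valQ Q s :=
  valQ_const (𝒜 := 𝒜) (ℬ := ℬ) k s ▸ valQ_mono h

theorem valQ_le {Q : 𝒮 → 𝒜 → ℬ → ℝ} {s : 𝒮} {k : ℝ} (h : ∀ a b, Q s a b ≤ k) :
    valQ Q s ≤ k :=
  valQ_const (𝒜 := 𝒜) (ℬ := ℬ) k s ▸ valQ_mono h

theorem valQ_gap {Q₁ Q₂ : 𝒮 → 𝒜 → ℬ → ℝ} {c m : ℝ} (h₁ : ∀ s a b, 0 ≤ Q₁ s a b)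
    (h₁₂ : ∀ s a b, Q₁ s a b ≤ Q₂ s a b) (h₂₁ : ∀ s a b, Q₂ s a b ≤ Q₁ s a b + m)
    (h₂ : ∀ s a b, Q₂ s a b ≤ c) :
    (∀ s, 0 ≤ valQ Q₁ s) ∧ (∀ s, valQ Q₁ s ≤ valQ Q₂ s) ∧
      (∀ s, valQ Q₂ s ≤ valQ Q₁ s + m) ∧ ∀ s, valQ Q₂ s ≤ c :=
  ⟨fun s => le_valQ (h₁ s), fun s => valQ_mono (h₁₂ s), fun s => valQ_le_valQ_add (h₂₁ s),
    fun s => valQ_le (h₂ s)⟩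

end MatrixGame

section Expectation

variable {𝒮 : Type} [Fintype 𝒮] {p : 𝒮 → ℝ}

theorem Pexp_add (p V₁ V₂ : 𝒮 → ℝ) :
    Pexp p (fun s => V₁ s + V₂ s) = Pexp p V₁ + Pexp p V₂ := by
  simp [Pexp, mul_add, Finset.sum_add_distrib]

theorem Pexp_sub (p V₁ V₂ : 𝒮 → ℝ) :
    Pexp p (fun s => V₂ s - V₁ s) = Pexp p V₂ - Pexp p V₁ := by
  simp [Pexp, mul_sub, Finset.sum_sub_distrib]

theorem Pexp_mul_const (p V : 𝒮 → ℝ) (k : ℝ) : Pexp p (fun s => V s * k) = Pexp p V * k := by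
  simp [Pexp, Finset.sum_mul, mul_assoc]

theorem Pexp_const (hp : p ∈ stdSimplex ℝ 𝒮) (k : ℝ) : Pexp p (fun _ => k) = k := by
  simp [Pexp, ← Finset.sum_mul, hp.2]

theorem Pexp_nonneg (hp : ∀ s, 0 ≤ p s) {V : 𝒮 → ℝ} (h : ∀ s, 0 ≤ V s) :
    0 ≤ Pexp p V :=
  Finset.sum_nonneg fun s _ => mul_nonneg (hp s) (h s)

theorem Pexp_mono (hp : ∀ s, 0 ≤ p s) {V₁ V₂ : 𝒮 → ℝ} (h : ∀ s, V₁ s ≤ V₂ s) :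
    Pexp p V₁ ≤ Pexp p V₂ :=
  Finset.sum_le_sum fun s _ => mul_le_mul_of_nonneg_left (h s) (hp s)

theorem varP_eq_Pexp_sq (hp : p ∈ stdSimplex ℝ 𝒮) (V : 𝒮 → ℝ) :
    varP p V = Pexp p (fun s => (V s - Pexp p V) ^ 2) := by
  have h : (fun s => (V s - Pexp p V) ^ 2)
      = fun s => V s * V s - V s * (2 * Pexp p V) + Pexp p V ^ 2 := by
    funext s; ring
  rw [h, Pexp_add, Pexp_sub, Pexp_mul_const, Pexp_const hp, varP]; ring

theorem varP_nonneg (hp : p ∈ stdSimplex ℝ 𝒮) (V : 𝒮 → ℝ) : 0 ≤ varP p V := by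
  rw [varP_eq_Pexp_sq hp]; exact Pexp_nonneg hp.1 fun s => sq_nonneg _

def covP (p X Y : 𝒮 → ℝ) : ℝ := Pexp p (fun s => X s * Y s) - Pexp p X * Pexp p Y

theorem varP_sub_varP (p V₁ V₂ : 𝒮 → ℝ) :
    varP p V₂ - varP p V₁ = covP p (fun s => V₂ s - V₁ s) (fun s => V₁ s + V₂ s) := by
  have h : Pexp p (fun s => (V₂ s - V₁ s) * (V₁ s + V₂ s))
      = Pexp p (fun s => V₂ s * V₂ s) - Pexp p (fun s => V₁ s * V₁ s) := by
    rw [← Pexp_sub]; congr 1; funext s; ring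
  rw [covP, h, Pexp_sub, Pexp_add, varP, varP]; ring

theorem covP_const_sub (hp : p ∈ stdSimplex ℝ 𝒮) (m : ℝ) (X Y : 𝒮 → ℝ) :
    covP p (fun s => m - X s) Y = -covP p X Y := by
  have h : Pexp p (fun s => (m - X s) * Y s)
      = Pexp p (fun s => Y s * m) - Pexp p (fun s => X s * Y s) := by
    rw [← Pexp_sub]; congr 1; funext s; ring
  rw [covP, covP, h, Pexp_sub, Pexp_const hp, Pexp_mul_const]; ring

theorem abs_covP_le (hp : p ∈ stdSimplex ℝ 𝒮) {X Y : 𝒮 → ℝ} {b : ℝ} (hX : ∀ s, 0 ≤ X s)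
    (hY : ∀ s, 0 ≤ Y s) (hYb : ∀ s, Y s ≤ b) : |covP p X Y| ≤ b * Pexp p X := by
  have hXY : Pexp p (fun s => X s * Y s) ≤ Pexp p X * b :=
    (Pexp_mono hp.1 fun s => mul_le_mul_of_nonneg_left (hYb s) (hX s)).trans_eq
      (Pexp_mul_const p X b)
  have hEY : Pexp p Y ≤ b := (Pexp_mono hp.1 hYb).trans_eq (Pexp_const hp b)
  rw [mul_comm b]
  exact abs_sub_le_of_nonneg_of_le (Pexp_nonneg hp.1 fun s => mul_nonneg (hX s) (hY s)) hXY
    (mul_nonneg (Pexp_nonneg hp.1 hX) (Pexp_nonneg hp.1 hY))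
    (mul_le_mul_of_nonneg_left hEY (Pexp_nonneg hp.1 hX))

theorem abs_varP_sub_le (hp : p ∈ stdSimplex ℝ 𝒮) {V₁ V₂ : 𝒮 → ℝ} {c m : ℝ}
    (h₁ : ∀ s, 0 ≤ V₁ s) (h₁₂ : ∀ s, V₁ s ≤ V₂ s) (h₂₁ : ∀ s, V₂ s ≤ V₁ s + m)
    (h₂ : ∀ s, V₂ s ≤ c) :
    |varP p V₂ - varP p V₁| ≤ 2 * c * (Pexp p V₂ - Pexp p V₁) ∧
      |varP p V₂ - varP p V₁| ≤ 2 * c * (m - (Pexp p V₂ - Pexp p V₁)) := by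
  have hS : ∀ s, 0 ≤ V₁ s + V₂ s := fun s => by linarith [h₁ s, h₁₂ s]
  have hSc : ∀ s, V₁ s + V₂ s ≤ 2 * c := fun s => by linarith [h₁₂ s, h₂ s]
  have hm : m - Pexp p (fun s => V₂ s - V₁ s) = Pexp p (fun s => m - (V₂ s - V₁ s)) := by
    rw [Pexp_sub _ _ (fun _ => m), Pexp_const hp]
  rw [varP_sub_varP, ← Pexp_sub, hm]
  refine ⟨abs_covP_le hp (fun s => sub_nonneg.2 (h₁₂ s)) hS hSc, ?_⟩
  rw [← abs_neg, ← covP_const_sub hp m]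
  exact abs_covP_le hp (fun s => by linarith [h₂₁ s]) hS hSc

end Expectation

section Penalty

theorem max_sqrt_sub_max_sqrt_le {a x y : ℝ} (ha : 0 < a) (hx : 0 ≤ x) (hxy : x ≤ y) :
    max √y a - max √x a ≤ (y - x) / (2 * a) := by
  rw [le_div_iff₀ (by positivity)]
  rcases le_total √y a with hy | hy
  · have : max √y a ≤ max √x a := by rw [max_eq_right hy]; exact le_max_right _ _
    nlinarith
  · set μ := max √x a
    have hμa : a ≤ μ := le_max_right _ _
    have hμy : μ ≤ √y := max_le (Real.sqrt_le_sqrt hxy) hy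
    have hxμ : x ≤ μ ^ 2 := by
      rw [← Real.sq_sqrt hx]; exact pow_le_pow_left₀ (Real.sqrt_nonneg x) (le_max_left _ _) 2
    rw [max_eq_left hy]
    nlinarith [Real.sq_sqrt (hx.trans hxy)]

theorem abs_min_max_sqrt_sub_le {K c x y : ℝ} (hc : 0 < c) (hx : 0 ≤ x) (hy : 0 ≤ y) :
    |min (max √(K * y) (2 * K * c)) c - min (max √(K * x) (2 * K * c)) c|
      ≤ |y - x| / (4 * c) := by
  rcases le_or_gt K 0 with hK | hK
  · rw [Real.sqrt_eq_zero'.2 (mul_nonpos_of_nonpos_of_nonneg hK hy),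
      Real.sqrt_eq_zero'.2 (mul_nonpos_of_nonpos_of_nonneg hK hx), sub_self, abs_zero]
    positivity
  wlog hxy : x ≤ y generalizing x y
  · rw [abs_sub_comm, abs_sub_comm y]; exact this hy hx (le_of_not_ge hxy)
  have hmono : max √(K * x) (2 * K * c) ≤ max √(K * y) (2 * K * c) :=
    max_le_max_right _ (Real.sqrt_le_sqrt (by nlinarith))
  rw [abs_of_nonneg (sub_nonneg.2 (min_le_min_right c hmono)), abs_of_nonneg (sub_nonneg.2 hxy)]
  calc _ ≤ max √(K * y) (2 * K * c) - max √(K * x) (2 * K * c) := by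
        refine (le_abs_self _).trans ((abs_min_sub_min_le_max _ _ _ _).trans ?_)
        rw [sub_self, abs_zero, max_eq_left (abs_nonneg _), abs_of_nonneg (sub_nonneg.2 hmono)]
    _ ≤ (K * y - K * x) / (2 * (2 * K * c)) :=
        max_sqrt_sub_max_sqrt_le (by positivity) (mul_nonneg hK.le hx)
          (mul_le_mul_of_nonneg_left hxy hK.le)
    _ = (y - x) / (4 * c) := by field_simp; ring

variable {𝒮 : Type} [Fintype 𝒮] {γ δ Cb : ℝ} {N n : ℕ} {p : 𝒮 → ℝ}

theorem abs_penalty_sub_le (hγ : γ < 1) {V₁ V₂ : 𝒮 → ℝ} (h₁ : 0 ≤ varP p V₁)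
    (h₂ : 0 ≤ varP p V₂) :
    |penalty γ δ Cb N n p V₂ - penalty γ δ Cb N n p V₁|
      ≤ (1 - γ) / 4 * |varP p V₂ - varP p V₁| := by
  have hγ' : 0 < 1 - γ := by linarith
  rcases eq_or_ne n 0 with rfl | hn
  · simp [penalty]; positivity
  set K := Cb * Real.log (N / ((1 - γ) * δ)) / n
  have hform : ∀ V, penalty γ δ Cb N n p V
      = min (max √(K * varP p V) (2 * K * (1 / (1 - γ)))) (1 / (1 - γ)) + 4 / N := by
    intro V
    simp only [penalty, if_neg hn, K]
    congr 4
    · ring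
    · rw [mul_comm (1 - γ), ← div_div]; ring
  rw [hform, hform, add_sub_add_right_eq_sub]
  refine (abs_min_max_sqrt_sub_le (by positivity) h₁ h₂).trans_eq ?_
  field_simp

theorem abs_penalty_sub_le_of_gap (hγl : 1 / 2 ≤ γ) (hγu : γ < 1) (hp : p ∈ stdSimplex ℝ 𝒮)
    {V₁ V₂ : 𝒮 → ℝ} {m : ℝ} (h₁ : ∀ s, 0 ≤ V₁ s) (h₁₂ : ∀ s, V₁ s ≤ V₂ s)
    (h₂₁ : ∀ s, V₂ s ≤ V₁ s + m) (h₂ : ∀ s, V₂ s ≤ 1 / (1 - γ)) :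
    |penalty γ δ Cb N n p V₂ - penalty γ δ Cb N n p V₁| ≤ γ * (Pexp p V₂ - Pexp p V₁) ∧
      |penalty γ δ Cb N n p V₂ - penalty γ δ Cb N n p V₁|
        ≤ γ * (m - (Pexp p V₂ - Pexp p V₁)) := by
  have hγ' : 0 < 1 - γ := by linarith
  have hβ := abs_penalty_sub_le (δ := δ) (Cb := Cb) (N := N) (n := n) hγu
    (varP_nonneg hp V₁) (varP_nonneg hp V₂)
  have halve : ∀ x, |varP p V₂ - varP p V₁| ≤ 2 * (1 / (1 - γ)) * x →
      (1 - γ) / 4 * |varP p V₂ - varP p V₁| ≤ γ * x := by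
    intro x hx
    have hx₀ : 0 ≤ x := nonneg_of_mul_nonneg_right ((abs_nonneg _).trans hx) (by positivity)
    calc (1 - γ) / 4 * |varP p V₂ - varP p V₁| ≤ (1 - γ) / 4 * (2 * (1 / (1 - γ)) * x) := by
          gcongr
      _ = x / 2 := by field_simp; ring
      _ ≤ γ * x := by nlinarith
  obtain ⟨hu, hmu⟩ := abs_varP_sub_le hp h₁ h₁₂ h₂₁ h₂
  exact ⟨hβ.trans (halve _ hu), hβ.trans (halve _ hmu)⟩

end Penalty

section BellmanOperators

variable {𝒮 𝒜 ℬ : Type} [Fintype 𝒮] [Fintype 𝒜] [Fintype ℬ] [Nonempty 𝒜] [Nonempty ℬ]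
  {γ δ Cb : ℝ} {N : ℕ} {n : 𝒮 → 𝒜 → ℬ → ℕ} {Ph : 𝒮 → 𝒜 → ℬ → 𝒮 → ℝ}
  {rh : 𝒮 → 𝒜 → ℬ → ℝ} {Q₁ Q₂ : 𝒮 → 𝒜 → ℬ → ℝ} {m : ℝ}

theorem TpeMinus_gap (hγl : 1 / 2 ≤ γ) (hγu : γ < 1) (hPh : IsKernel Ph)
    (h₁ : ∀ s a b, 0 ≤ Q₁ s a b) (h₁₂ : ∀ s a b, Q₁ s a b ≤ Q₂ s a b)
    (h₂₁ : ∀ s a b, Q₂ s a b ≤ Q₁ s a b + m) (h₂ : ∀ s a b, Q₂ s a b ≤ 1 / (1 - γ))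
    (s : 𝒮) (a : 𝒜) (b : ℬ) :
    TpeMinus γ δ Cb N n Ph rh Q₁ s a b ≤ TpeMinus γ δ Cb N n Ph rh Q₂ s a b ∧
      TpeMinus γ δ Cb N n Ph rh Q₂ s a b ≤ TpeMinus γ δ Cb N n Ph rh Q₁ s a b + γ * m := by
  obtain ⟨hv₁, hv₁₂, hv₂₁, hv₂⟩ := valQ_gap h₁ h₁₂ h₂₁ h₂
  obtain ⟨hu, hmu⟩ := abs_penalty_sub_le_of_gap (δ := δ) (Cb := Cb) (N := N) (n := n s a b)
    hγl hγu (hPh s a b) hv₁ hv₁₂ hv₂₁ hv₂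
  rw [abs_le] at hu hmu
  exact ⟨max_le_max_right 0 (by linarith),
    (max_le_max (by linarith) (by linarith)).trans_eq (max_add_add_right _ _ _)⟩

theorem TpePlus_gap (hγl : 1 / 2 ≤ γ) (hγu : γ < 1) (hPh : IsKernel Ph)
    (h₁ : ∀ s a b, 0 ≤ Q₁ s a b) (h₁₂ : ∀ s a b, Q₁ s a b ≤ Q₂ s a b)
    (h₂₁ : ∀ s a b, Q₂ s a b ≤ Q₁ s a b + m) (h₂ : ∀ s a b, Q₂ s a b ≤ 1 / (1 - γ))
    (s : 𝒮) (a : 𝒜) (b : ℬ) :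
    TpePlus γ δ Cb N n Ph rh Q₁ s a b ≤ TpePlus γ δ Cb N n Ph rh Q₂ s a b ∧
      TpePlus γ δ Cb N n Ph rh Q₂ s a b ≤ TpePlus γ δ Cb N n Ph rh Q₁ s a b + γ * m := by
  obtain ⟨hv₁, hv₁₂, hv₂₁, hv₂⟩ := valQ_gap h₁ h₁₂ h₂₁ h₂
  obtain ⟨hu, hmu⟩ := abs_penalty_sub_le_of_gap (δ := δ) (Cb := Cb) (N := N) (n := n s a b)
    hγl hγu (hPh s a b) hv₁ hv₁₂ hv₂₁ hv₂
  rw [abs_le] at hu hmu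
  exact ⟨min_le_min_right _ (by linarith),
    (min_le_min (by linarith) (by linarith)).trans_eq (min_add_add_right _ _ _)⟩

theorem TpeMinus_iterate_gap (hγl : 1 / 2 ≤ γ) (hγu : γ < 1) (hPh : IsKernel Ph)
    {Q : 𝒮 → 𝒜 → ℬ → ℝ} (hQ : ∀ s a b, Q s a b ∈ Set.Icc 0 (1 / (1 - γ)))
    (hfix : TpeMinus γ δ Cb N n Ph rh Q = Q) (t : ℕ) :
    ∀ s a b, (TpeMinus γ δ Cb N n Ph rh)^[t] (fun _ _ _ => 0) s a b ≤ Q s a b ∧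
      Q s a b ≤ (TpeMinus γ δ Cb N n Ph rh)^[t] (fun _ _ _ => 0) s a b + γ ^ t / (1 - γ) ∧
      0 ≤ (TpeMinus γ δ Cb N n Ph rh)^[t] (fun _ _ _ => 0) s a b := by
  induction t with
  | zero => intro s a b; simpa using hQ s a b
  | succ t ih =>
    intro s a b
    obtain ⟨hle, hgap⟩ := TpeMinus_gap hγl hγu hPh (fun s a b => (ih s a b).2.2)
      (fun s a b => (ih s a b).1) (fun s a b => (ih s a b).2.1) (fun s a b => (hQ s a b).2) s a b
    rw [hfix] at hle hgap
    rw [Function.iterate_succ_apply', pow_succ, mul_comm _ γ, mul_div_assoc]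
    exact ⟨hle, hgap, le_max_right _ _⟩

theorem TpePlus_iterate_gap (hγl : 1 / 2 ≤ γ) (hγu : γ < 1) (hPh : IsKernel Ph)
    {Q : 𝒮 → 𝒜 → ℬ → ℝ} (hQ : ∀ s a b, Q s a b ∈ Set.Icc 0 (1 / (1 - γ)))
    (hfix : TpePlus γ δ Cb N n Ph rh Q = Q) (t : ℕ) :
    ∀ s a b, Q s a b ≤ (TpePlus γ δ Cb N n Ph rh)^[t] (fun _ _ _ => 1 / (1 - γ)) s a b ∧
      (TpePlus γ δ Cb N n Ph rh)^[t] (fun _ _ _ => 1 / (1 - γ)) s a b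
        ≤ Q s a b + γ ^ t / (1 - γ) ∧
      (TpePlus γ δ Cb N n Ph rh)^[t] (fun _ _ _ => 1 / (1 - γ)) s a b ≤ 1 / (1 - γ) := by
  induction t with
  | zero =>
    intro s a b
    simp only [Function.iterate_zero, id_eq, pow_zero]
    exact ⟨(hQ s a b).2, by linarith [(hQ s a b).1], le_rfl⟩
  | succ t ih =>
    intro s a b
    obtain ⟨hle, hgap⟩ := TpePlus_gap hγl hγu hPh (fun s a b => (hQ s a b).1)
      (fun s a b => (ih s a b).1) (fun s a b => (ih s a b).2.1) (fun s a b => (ih s a b).2.2) s a b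
    rw [hfix] at hle hgap
    rw [Function.iterate_succ_apply', pow_succ, mul_comm _ γ, mul_div_assoc]
    exact ⟨hle, hgap, min_le_right _ _⟩

end BellmanOperators

theorem supNormQ_le {𝒮 𝒜 ℬ : Type} {f : 𝒮 → 𝒜 → ℬ → ℝ} {K : ℝ} (hK : 0 ≤ K)
    (h : ∀ s a b, |f s a b| ≤ K) : supNormQ f ≤ K :=
  Real.iSup_le (fun s => Real.iSup_le (fun a => Real.iSup_le (h s a) hK) hK) hK

theorem supNormS_le {𝒮 : Type} {f : 𝒮 → ℝ} {K : ℝ} (hK : 0 ≤ K) (h : ∀ s, |f s| ≤ K) :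
    supNormS f ≤ K :=
  Real.iSup_le h hK

theorem pow_Titer_div_le {γ : ℝ} {N : ℕ} (hγ₀ : 0 < γ) (hγ₁ : γ < 1) (hN : 1 ≤ N) :
    γ ^ Titer γ N / (1 - γ) ≤ 1 / N := by
  have hγ' : 0 < 1 - γ := by linarith
  have hN' : (0 : ℝ) < N := by exact_mod_cast hN
  have hlog : 0 < -Real.log γ := neg_pos.2 (Real.log_neg hγ₀ hγ₁)
  have hceil : Real.log (N / (1 - γ)) ≤ Titer γ N * -Real.log γ := by
    have : Real.log (N / (1 - γ)) / Real.log (1 / γ) ≤ Titer γ N := Nat.le_ceil _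
    rwa [one_div, Real.log_inv, div_le_iff₀ hlog] at this
  have hpow : γ ^ Titer γ N ≤ (1 - γ) / N := by
    rw [← Real.log_le_log_iff (by positivity) (by positivity), Real.log_pow, ← inv_div,
      Real.log_inv]
    linarith
  calc γ ^ Titer γ N / (1 - γ) ≤ (1 - γ) / N / (1 - γ) := by gcongr
    _ = 1 / N := by field_simp

end ZSMG

open ZSMG in
theorem statement19_general {𝒮 𝒜 ℬ : Type} [Fintype 𝒮] [Fintype 𝒜] [Fintype ℬ]
    [Nonempty 𝒜] [Nonempty ℬ]
    (γ δ Cb : ℝ) (hγl : 1 / 2 ≤ γ) (hγu : γ < 1)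
    (N : ℕ) (hN : 1 ≤ N)
    (n : 𝒮 → 𝒜 → ℬ → ℕ) (Ph : 𝒮 → 𝒜 → ℬ → 𝒮 → ℝ) (hPh : IsKernel Ph)
    (rh : 𝒮 → 𝒜 → ℬ → ℝ)
    (Qm Qp : 𝒮 → 𝒜 → ℬ → ℝ)
    (hQm : (∀ s a b, Qm s a b ∈ Set.Icc (0 : ℝ) (1 / (1 - γ))) ∧
      TpeMinus γ δ Cb N n Ph rh Qm = Qm)
    (hQp : (∀ s a b, Qp s a b ∈ Set.Icc (0 : ℝ) (1 / (1 - γ))) ∧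
      TpePlus γ δ Cb N n Ph rh Qp = Qp) :
    (∀ t : ℕ, ∀ s a b,
      (TpeMinus γ δ Cb N n Ph rh)^[t] (fun _ _ _ => 0) s a b ≤ Qm s a b) ∧
    (∀ t : ℕ, ∀ s a b,
      Qp s a b ≤ (TpePlus γ δ Cb N n Ph rh)^[t] (fun _ _ _ => 1 / (1 - γ)) s a b) ∧
    supNormQ (fun s a b =>
        (TpeMinus γ δ Cb N n Ph rh)^[Titer γ N] (fun _ _ _ => 0) s a b - Qm s a b)
      ≤ γ ^ Titer γ N / (1 - γ) ∧
    supNormQ (fun s a b =>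
        (TpePlus γ δ Cb N n Ph rh)^[Titer γ N] (fun _ _ _ => 1 / (1 - γ)) s a b - Qp s a b)
      ≤ γ ^ Titer γ N / (1 - γ) ∧
    γ ^ Titer γ N / (1 - γ) ≤ 1 / (N : ℝ) ∧
    supNormS (fun s =>
        valQ ((TpeMinus γ δ Cb N n Ph rh)^[Titer γ N] (fun _ _ _ => 0)) s - valQ Qm s)
      ≤ 1 / (N : ℝ) ∧
    supNormS (fun s =>
        valQ ((TpePlus γ δ Cb N n Ph rh)^[Titer γ N] (fun _ _ _ => 1 / (1 - γ))) s - valQ Qp s)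
      ≤ 1 / (N : ℝ) := by
  have hminus := TpeMinus_iterate_gap hγl hγu hPh hQm.1 hQm.2
  have hplus := TpePlus_iterate_gap hγl hγu hPh hQp.1 hQp.2
  have hT := pow_Titer_div_le (by linarith) hγu hN
  have hg : 0 ≤ γ ^ Titer γ N / (1 - γ) := div_nonneg (pow_nonneg (by linarith) _) (by linarith)
  refine ⟨fun t s a b => (hminus t s a b).1, fun t s a b => (hplus t s a b).1, ?_, ?_, hT, ?_, ?_⟩
  · exact supNormQ_le hg fun s a b => abs_sub_le_iff.2
      ⟨by linarith [hminus (Titer γ N) s a b], by linarith [hminus (Titer γ N) s a b]⟩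
  · exact supNormQ_le hg fun s a b => abs_sub_le_iff.2
      ⟨by linarith [hplus (Titer γ N) s a b], by linarith [hplus (Titer γ N) s a b]⟩
  · refine supNormS_le (hg.trans hT) fun s => (abs_sub_le_iff.2 ⟨?_, ?_⟩).trans hT
    · linarith [valQ_mono (s := s) fun a b => (hminus (Titer γ N) s a b).1]
    · exact sub_le_iff_le_add'.2 (valQ_le_valQ_add fun a b => (hminus (Titer γ N) s a b).2.1)
  · refine supNormS_le (hg.trans hT) fun s => (abs_sub_le_iff.2 ⟨?_, ?_⟩).trans hT
    · exact sub_le_iff_le_add'.2 (valQ_le_valQ_add fun a b => (hplus (Titer γ N) s a b).2.1)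
    · linarith [valQ_mono (s := s) fun a b => (hplus (Titer γ N) s a b).1]

open ZSMG in
/-- the VI-LCB-Game iterates approach the fixed points of the
pessimistic Bellman operators monotonically from below/above, and after
`T = ⌈log(N/(1−γ))/log(1/γ)⌉` iterations are within `γ^T/(1−γ) ≤ 1/N`. -/
theorem statement19 {𝒮 𝒜 ℬ : Type} [Fintype 𝒮] [Fintype 𝒜] [Fintype ℬ]
    [Nonempty 𝒮] [Nonempty 𝒜] [Nonempty ℬ]
    (γ δ Cb : ℝ) (hγl : 1 / 2 ≤ γ) (hγu : γ < 1) (hδ : δ ∈ Set.Ioo (0 : ℝ) 1)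
    (hCb : 1 ≤ Cb) (N : ℕ) (hN : 1 ≤ N)
    (n : 𝒮 → 𝒜 → ℬ → ℕ) (Ph : 𝒮 → 𝒜 → ℬ → 𝒮 → ℝ) (hPh : IsKernel Ph)
    (rh : 𝒮 → 𝒜 → ℬ → ℝ) (hrh : IsReward rh)
    (Qm Qp : 𝒮 → 𝒜 → ℬ → ℝ)
    (hQm : (∀ s a b, Qm s a b ∈ Set.Icc (0 : ℝ) (1 / (1 - γ))) ∧
      TpeMinus γ δ Cb N n Ph rh Qm = Qm)
    (hQp : (∀ s a b, Qp s a b ∈ Set.Icc (0 : ℝ) (1 / (1 - γ))) ∧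
      TpePlus γ δ Cb N n Ph rh Qp = Qp) :
    (∀ t : ℕ, ∀ s a b,
      (TpeMinus γ δ Cb N n Ph rh)^[t] (fun _ _ _ => 0) s a b ≤ Qm s a b) ∧
    (∀ t : ℕ, ∀ s a b,
      Qp s a b ≤ (TpePlus γ δ Cb N n Ph rh)^[t] (fun _ _ _ => 1 / (1 - γ)) s a b) ∧
    supNormQ (fun s a b =>
        (TpeMinus γ δ Cb N n Ph rh)^[Titer γ N] (fun _ _ _ => 0) s a b - Qm s a b)
      ≤ γ ^ Titer γ N / (1 - γ) ∧
    supNormQ (fun s a b =>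
        (TpePlus γ δ Cb N n Ph rh)^[Titer γ N] (fun _ _ _ => 1 / (1 - γ)) s a b - Qp s a b)
      ≤ γ ^ Titer γ N / (1 - γ) ∧
    γ ^ Titer γ N / (1 - γ) ≤ 1 / (N : ℝ) ∧
    supNormS (fun s =>
        valQ ((TpeMinus γ δ Cb N n Ph rh)^[Titer γ N] (fun _ _ _ => 0)) s - valQ Qm s)
      ≤ 1 / (N : ℝ) ∧
    supNormS (fun s =>
        valQ ((TpePlus γ δ Cb N n Ph rh)^[Titer γ N] (fun _ _ _ => 1 / (1 - γ))) s - valQ Qp s)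
      ≤ 1 / (N : ℝ) :=
  statement19_general γ δ Cb hγl hγu N hN n Ph hPh rh Qm Qp hQm hQp
end
end
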